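/- arXiv:2412.20919 — 11 statements merged into one kernel-verified Lean document; each statement's English description precedes it below -/
import Mathlib

section
/- Let a,b>0 and k>0 with sin(ak)≠0 and sin(bk)≠0. Define F(τ₁,τ₂,k) := (τ₁−cos(ak))/sin(ak) + (τ₂−cos(bk))/sin(bk). Then the maximum of F(τ₁,τ₂,k) over (τ₁,τ₂)∈[−1,1]×[−1,1] equals F₊(k) := tan(ka/2 − (π/2)·⌊ka/π⌋) + tan(kb/2 − (π/2)·⌊kb/π⌋), and the minimum equals F₋(k) := −cot(ka/2 − (π/2)·⌊ka/π⌋) − cot(kb/2 − (π/2)·⌊kb/π⌋). -/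
/-!
For fixed `x` with `sin x ≠ 0`, the map `t ↦ (t - cos x) / sin x` is affine, so on `[-1, 1]` its
extreme values are `(±1 - cos x) / sin x`. Writing `x = 2θ + nπ` with `n = ⌊x / π⌋`, so that
`θ ∈ (0, π/2)`, the factor `(-1)ⁿ` in `sin x` and `cos x` only reflects `[-1, 1]`, and the
half-angle formulas turn the extreme values into `tan θ` and `-cot θ`. The two-variable function is
a sum of two such maps in independent variables, so its extrema are the sums of theirs.
-/

open Real Set

noncomputable def reducedHalfAngle (x : ℝ) : ℝ := x / 2 - π / 2 * ⌊x / π⌋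

theorem two_mul_reducedHalfAngle_add (x : ℝ) : 2 * reducedHalfAngle x + ⌊x / π⌋ * π = x := by
  unfold reducedHalfAngle; ring

theorem reducedHalfAngle_mem_Ioo {x : ℝ} (hs : sin x ≠ 0) : reducedHalfAngle x ∈ Ioo 0 (π / 2) := by
  have hle : (⌊x / π⌋ : ℝ) * π ≤ x := (le_div_iff₀ pi_pos).mp (Int.floor_le _)
  have hne : (⌊x / π⌋ : ℝ) * π ≠ x := fun h => hs (h ▸ sin_int_mul_pi _)
  have hlt : x < (⌊x / π⌋ + 1 : ℝ) * π := (div_lt_iff₀ pi_pos).mp (Int.lt_floor_add_one _)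
  unfold reducedHalfAngle
  constructor <;> linarith [hle.lt_of_ne hne]

theorem one_sub_cos_two_mul_div_sin_two_mul {θ : ℝ} (hs : sin θ ≠ 0) (hc : cos θ ≠ 0) :
    (1 - cos (2 * θ)) / sin (2 * θ) = tan θ := by
  rw [cos_two_mul', sin_two_mul, tan_eq_sin_div_cos]
  field_simp
  nlinarith [sin_sq_add_cos_sq θ]

theorem neg_one_sub_cos_two_mul_div_sin_two_mul {θ : ℝ} (hs : sin θ ≠ 0) (hc : cos θ ≠ 0) :
    (-1 - cos (2 * θ)) / sin (2 * θ) = -cos θ / sin θ := by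
  rw [cos_two_mul', sin_two_mul]
  field_simp
  nlinarith [sin_sq_add_cos_sq θ]

theorem image_neg_one_zpow_mul_Icc (n : ℤ) : (fun t : ℝ => (-1) ^ n * t) '' Icc (-1) 1 = Icc (-1) 1 := by
  rcases Int.even_or_odd n with h | h <;> simp [h.neg_one_zpow]

theorem image_sub_div_Icc_neg_one_one {c s : ℝ} (hs : 0 < s) :
    (fun t => (t - c) / s) '' Icc (-1) 1 = Icc ((-1 - c) / s) ((1 - c) / s) := by
  have : (fun t => (t - c) / s) = (s⁻¹ * · + -c / s) := by funext t; ring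
  rw [this, image_affine_Icc' (inv_pos.2 hs)]
  congr 1 <;> ring

theorem image_sub_cos_div_sin_Icc {x : ℝ} (hs : sin x ≠ 0) :
    (fun t => (t - cos x) / sin x) '' Icc (-1) 1 =
      Icc (-cos (reducedHalfAngle x) / sin (reducedHalfAngle x)) (tan (reducedHalfAngle x)) := by
  set θ := reducedHalfAngle x
  obtain ⟨hθ0, hθ1⟩ := reducedHalfAngle_mem_Ioo hs
  have hsθ : 0 < sin θ := sin_pos_of_pos_of_lt_pi hθ0 (by linarith)
  have hcθ : 0 < cos θ := cos_pos_of_mem_Ioo ⟨by linarith, hθ1⟩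
  have hs2θ : 0 < sin (2 * θ) := by rw [sin_two_mul]; positivity
  have hx := two_mul_reducedHalfAngle_add x
  have hsin : sin x = (-1) ^ ⌊x / π⌋ * sin (2 * θ) := by rw [← sin_add_int_mul_pi, hx]
  have hcos : cos x = (-1) ^ ⌊x / π⌋ * cos (2 * θ) := by rw [← cos_add_int_mul_pi, hx]
  have hfun : (fun t => (t - cos x) / sin x) =
      (fun t => (t - cos (2 * θ)) / sin (2 * θ)) ∘ (fun t => (-1) ^ ⌊x / π⌋ * t) := by
    funext t
    rcases Int.even_or_odd ⌊x / π⌋ with h | h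
    · simp [hsin, hcos, h.neg_one_zpow]
    · simp only [Function.comp, hsin, hcos, h.neg_one_zpow]
      field_simp
      ring
  rw [hfun, image_comp, image_neg_one_zpow_mul_Icc, image_sub_div_Icc_neg_one_one hs2θ,
    one_sub_cos_two_mul_div_sin_two_mul hsθ.ne' hcθ.ne',
    neg_one_sub_cos_two_mul_div_sin_two_mul hsθ.ne' hcθ.ne']

theorem neg_cos_div_sin_le_tan_reducedHalfAngle {x : ℝ} (hs : sin x ≠ 0) :
    -cos (reducedHalfAngle x) / sin (reducedHalfAngle x) ≤ tan (reducedHalfAngle x) :=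
  nonempty_Icc.1 <| image_sub_cos_div_sin_Icc hs ▸ (nonempty_Icc.2 (by norm_num)).image _

theorem image_prod_add {α β γ : Type*} [Add γ] (f : α → γ) (g : β → γ) (s : Set α) (t : Set β) :
    (fun p : α × β => f p.1 + g p.2) '' s ×ˢ t = image2 (· + ·) (f '' s) (g '' t) := by
  rw [image2_image_left, image2_image_right, ← image_prod]

theorem stmt_2_general (a b k : ℝ)
    (hsa : Real.sin (a * k) ≠ 0) (hsb : Real.sin (b * k) ≠ 0) :
    IsGreatest ((fun p : ℝ × ℝ =>
        (p.1 - Real.cos (a * k)) / Real.sin (a * k) +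
          (p.2 - Real.cos (b * k)) / Real.sin (b * k)) ''
        (Set.Icc (-1 : ℝ) 1 ×ˢ Set.Icc (-1 : ℝ) 1))
      (Real.tan (k * a / 2 - π / 2 * (⌊k * a / π⌋ : ℤ)) +
        Real.tan (k * b / 2 - π / 2 * (⌊k * b / π⌋ : ℤ))) ∧
    IsLeast ((fun p : ℝ × ℝ =>
        (p.1 - Real.cos (a * k)) / Real.sin (a * k) +
          (p.2 - Real.cos (b * k)) / Real.sin (b * k)) ''
        (Set.Icc (-1 : ℝ) 1 ×ˢ Set.Icc (-1 : ℝ) 1))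
      (-Real.cos (k * a / 2 - π / 2 * (⌊k * a / π⌋ : ℤ)) / Real.sin (k * a / 2 - π / 2 * (⌊k * a / π⌋ : ℤ)) -
        Real.cos (k * b / 2 - π / 2 * (⌊k * b / π⌋ : ℤ)) / Real.sin (k * b / 2 - π / 2 * (⌊k * b / π⌋ : ℤ))) := by
  rw [mul_comm k a, mul_comm k b, image_prod_add (fun t => (t - cos (a * k)) / sin (a * k))
    (fun t => (t - cos (b * k)) / sin (b * k)), image_sub_cos_div_sin_Icc hsa,
    image_sub_cos_div_sin_Icc hsb]
  refine ⟨(isGreatest_Icc (neg_cos_div_sin_le_tan_reducedHalfAngle hsa)).image2 (fun _ => add_left_mono) (fun _ => add_right_mono)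
    (isGreatest_Icc (neg_cos_div_sin_le_tan_reducedHalfAngle hsb)), ?_⟩
  rw [sub_eq_add_neg, ← neg_div]
  exact (isLeast_Icc (neg_cos_div_sin_le_tan_reducedHalfAngle hsa)).image2 (fun _ => add_left_mono) (fun _ => add_right_mono)
    (isLeast_Icc (neg_cos_div_sin_le_tan_reducedHalfAngle hsb))

theorem stmt_2 (a b k : ℝ) (ha : 0 < a) (hb : 0 < b) (hk : 0 < k)
    (hsa : Real.sin (a * k) ≠ 0) (hsb : Real.sin (b * k) ≠ 0) :
    IsGreatest ((fun p : ℝ × ℝ =>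
        (p.1 - Real.cos (a * k)) / Real.sin (a * k) +
          (p.2 - Real.cos (b * k)) / Real.sin (b * k)) ''
        (Set.Icc (-1 : ℝ) 1 ×ˢ Set.Icc (-1 : ℝ) 1))
      (Real.tan (k * a / 2 - π / 2 * (⌊k * a / π⌋ : ℤ)) +
        Real.tan (k * b / 2 - π / 2 * (⌊k * b / π⌋ : ℤ))) ∧
    IsLeast ((fun p : ℝ × ℝ =>
        (p.1 - Real.cos (a * k)) / Real.sin (a * k) +
          (p.2 - Real.cos (b * k)) / Real.sin (b * k)) ''
        (Set.Icc (-1 : ℝ) 1 ×ˢ Set.Icc (-1 : ℝ) 1))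
      (-Real.cos (k * a / 2 - π / 2 * (⌊k * a / π⌋ : ℤ)) / Real.sin (k * a / 2 - π / 2 * (⌊k * a / π⌋ : ℤ)) -
        Real.cos (k * b / 2 - π / 2 * (⌊k * b / π⌋ : ℤ)) / Real.sin (k * b / 2 - π / 2 * (⌊k * b / π⌋ : ℤ))) :=
  stmt_2_general a b k hsa hsb
end

section
/- Let a,b>0 and γ<0. Then the equation γ/(2κ) = −tanh(κa/2) − tanh(κb/2) has exactly one root κ₁ in (0,∞). -/
/-!
For `κ > 0`, multiplying the equation by `-κ` turns it into `F κ = -γ / 2` with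
`F κ = κ tanh (κ a / 2) + κ tanh (κ b / 2)`. On `[0, ∞)` each summand is a product of two
nonnegative increasing factors, one of them strictly increasing, so `F` is strictly increasing,
and it grows at least linearly. Since `F 0 = 0 < -γ / 2`, the intermediate value theorem gives a
positive root and strict monotonicity makes it unique.
-/

open Real Set Filter

namespace Real

theorem tanh_strictMono : StrictMono tanh := fun x y hxy => by
  rwa [← artanh_lt_artanh_iff ⟨neg_one_lt_tanh x, tanh_lt_one x⟩
    ⟨neg_one_lt_tanh y, tanh_lt_one y⟩, artanh_tanh, artanh_tanh]

theorem tanh_nonneg {x : ℝ} (hx : 0 ≤ x) : 0 ≤ tanh x :=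
  tanh_zero ▸ tanh_strictMono.monotone hx

theorem tanh_pos {x : ℝ} (hx : 0 < x) : 0 < tanh x :=
  tanh_zero ▸ tanh_strictMono hx

@[fun_prop]
theorem continuous_tanh : Continuous tanh := by
  simp_rw [funext tanh_eq_sinh_div_cosh]
  exact continuous_sinh.div continuous_cosh fun x => (cosh_pos x).ne'

end Real

theorem strictMonoOn_mul_tanh_mul {c : ℝ} (hc : 0 < c) :
    StrictMonoOn (fun x => x * tanh (x * c)) (Ici 0) := fun _ hx _ _ hxy =>
  mul_lt_mul' hxy.le (tanh_strictMono (mul_lt_mul_of_pos_right hxy hc))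
    (tanh_nonneg (mul_nonneg hx hc.le)) (lt_of_le_of_lt hx hxy)

theorem tendsto_mul_tanh_mul_atTop {c : ℝ} (hc : 0 < c) :
    Tendsto (fun x => x * tanh (x * c)) atTop atTop := by
  refine tendsto_atTop_mono' _ ?_ (tendsto_id.atTop_mul_const (tanh_pos hc))
  filter_upwards [eventually_ge_atTop 1] with x hx
  exact mul_le_mul_of_nonneg_left
    (tanh_strictMono.monotone (le_mul_of_one_le_left hc.le hx)) (show 0 ≤ x by linarith)

theorem existsUnique_of_strictMonoOn_Ici {α δ : Type*} [ConditionallyCompleteLinearOrder α]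
    [TopologicalSpace α] [OrderTopology α] [DenselyOrdered α] [LinearOrder δ] [TopologicalSpace δ]
    [OrderClosedTopology δ] {f : α → δ} {a : α} {y : δ} (hcont : ContinuousOn f (Ici a))
    (hmono : StrictMonoOn f (Ici a)) (htop : Tendsto f atTop atTop) (hy : f a < y) :
    ∃! x, a < x ∧ f x = y := by
  obtain ⟨x, hx, rfl⟩ := intermediate_value_Ioi hcont htop hy
  exact ⟨x, ⟨hx, rfl⟩, fun x' ⟨hx', hfx'⟩ =>
    hmono.injOn (mem_Ici_of_Ioi hx') (mem_Ici_of_Ioi hx) hfx'⟩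

theorem stmt_4 (a b γ : ℝ) (ha : 0 < a) (hb : 0 < b) (hγ : γ < 0) :
    ∃! κ : ℝ, 0 < κ ∧ γ / (2 * κ) = -Real.tanh (κ * a / 2) - Real.tanh (κ * b / 2) := by
  set F : ℝ → ℝ := fun κ => κ * tanh (κ * (a / 2)) + κ * tanh (κ * (b / 2))
  have hequiv (κ : ℝ) (hκ : 0 < κ) :
      γ / (2 * κ) = -tanh (κ * a / 2) - tanh (κ * b / 2) ↔ F κ = -γ / 2 := by
    simp only [F, ← mul_div_assoc]
    rw [div_eq_iff (by positivity)]
    constructor <;> intro h <;> linarith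
  have hcont : Continuous F := by simp only [F]; fun_prop
  have hmono : StrictMonoOn F (Ici 0) :=
    (strictMonoOn_mul_tanh_mul (half_pos ha)).add (strictMonoOn_mul_tanh_mul (half_pos hb))
  have htop : Tendsto F atTop atTop :=
    (tendsto_mul_tanh_mul_atTop (half_pos ha)).atTop_add_atTop
      (tendsto_mul_tanh_mul_atTop (half_pos hb))
  rw [existsUnique_congr fun κ => and_congr_right (hequiv κ)]
  have hF0 : F 0 < -γ / 2 := by simp only [F, zero_mul, add_zero]; linarith
  exact existsUnique_of_strictMonoOn_Ici hcont.continuousOn hmono htop hF0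
end

section
/- Let a,b>0, γ_* := −4(1/a + 1/b), and γ < γ_*. Then the equation γ/(2κ) = −coth(κa/2) − coth(κb/2) has exactly one root κ₂ in (0,∞). -/
/-!
Multiplying the equation by `-2κ` turns it into `F κ = -γ` with
`F κ = 2κ coth(κa/2) + 2κ coth(κb/2)`. Since `x coth x` is strictly increasing on `(0, ∞)` and
`x < x coth x ≤ 1 + x`, the function `F` is continuous, strictly increasing and satisfies
`4κ < F κ ≤ 4/a + 4/b + 4κ`. As `γ < γ_*` means `-γ > 4/a + 4/b`, `F` takes values below `-γ`
for small `κ` and above it for large `κ`; the intermediate value theorem and injectivity give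
the unique root.
-/

open Real Set

theorem IsPreconnected.existsUnique_eq_of_injOn {X α : Type*} [TopologicalSpace X] [LinearOrder α]
    [TopologicalSpace α] [OrderClosedTopology α] {s : Set X} (hs : IsPreconnected s)
    {f : X → α} (hf : ContinuousOn f s) (hinj : InjOn f s) {x₁ x₂ : X} (h₁ : x₁ ∈ s)
    (h₂ : x₂ ∈ s) {y : α} (hy : y ∈ Icc (f x₁) (f x₂)) : ∃! x, x ∈ s ∧ f x = y := by
  obtain ⟨x, hx, rfl⟩ := hs.intermediate_value h₁ h₂ hf hy
  exact ⟨x, ⟨hx, rfl⟩, fun x' ⟨hx', hfx'⟩ => hinj hx' hx hfx'⟩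

noncomputable def mulCoth (x : ℝ) : ℝ := x * cosh x / sinh x

theorem continuousOn_mulCoth : ContinuousOn mulCoth (Ioi 0) :=
  ((continuous_id.mul continuous_cosh).continuousOn.div continuous_sinh.continuousOn)
    fun _ hx => (sinh_pos_iff.mpr hx).ne'

theorem strictMonoOn_mulCoth : StrictMonoOn mulCoth (Ioi 0) := by
  refine strictMonoOn_of_deriv_pos (convex_Ioi 0) continuousOn_mulCoth fun x hx => ?_
  rw [interior_Ioi] at hx
  have hsinh : 0 < sinh x := sinh_pos_iff.mpr hx
  have hderiv : HasDerivAt mulCoth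
      (((1 * cosh x + x * sinh x) * sinh x - x * cosh x * cosh x) / sinh x ^ 2) x :=
    ((hasDerivAt_id x).mul (hasDerivAt_cosh x)).div (hasDerivAt_sinh x) hsinh.ne'
  -- The numerator is `sinh x cosh x - x = (sinh 2x - 2x) / 2`.
  have hnum : x < sinh x * cosh x := by
    have := self_lt_sinh_iff.mpr (mul_pos two_pos hx)
    rw [sinh_two_mul] at this
    linarith
  rw [hderiv.deriv]
  refine div_pos ?_ (pow_pos hsinh 2)
  linear_combination hnum + x * cosh_sq x

theorem lt_mulCoth {x : ℝ} (hx : 0 < x) : x < mulCoth x := by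
  rw [mulCoth, lt_div_iff₀ (sinh_pos_iff.mpr hx)]
  exact mul_lt_mul_of_pos_left (sinh_lt_cosh x) hx

-- `x (cosh x - sinh x) = x e^{-x} ≤ x ≤ sinh x`.
theorem mulCoth_le_one_add {x : ℝ} (hx : 0 < x) : mulCoth x ≤ 1 + x := by
  rw [mulCoth, div_le_iff₀ (sinh_pos_iff.mpr hx)]
  have hexp : cosh x - sinh x ≤ 1 := by
    rw [cosh_sub_sinh, exp_le_one_iff]
    linarith
  nlinarith [self_le_sinh_iff.mpr hx.le]

noncomputable def cothTerm (c κ : ℝ) : ℝ := 2 * κ * (cosh (κ * c / 2) / sinh (κ * c / 2))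

theorem cothTerm_eq_mulCoth {c : ℝ} (hc : c ≠ 0) (κ : ℝ) :
    cothTerm c κ = 4 / c * mulCoth (κ * c / 2) := by
  rw [cothTerm, mulCoth]
  field_simp
  ring

theorem continuousOn_cothTerm {c : ℝ} (hc : 0 < c) : ContinuousOn (cothTerm c) (Ioi 0) := by
  simp_rw [funext (cothTerm_eq_mulCoth hc.ne')]
  refine continuousOn_const.mul (continuousOn_mulCoth.comp (by fun_prop) fun κ hκ => ?_)
  exact div_pos (mul_pos hκ hc) two_pos

theorem strictMonoOn_cothTerm {c : ℝ} (hc : 0 < c) : StrictMonoOn (cothTerm c) (Ioi 0) := by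
  intro κ hκ κ' hκ' hlt
  simp only [cothTerm_eq_mulCoth hc.ne']
  refine mul_lt_mul_of_pos_left (strictMonoOn_mulCoth ?_ ?_ ?_) (by positivity)
  · exact div_pos (mul_pos hκ hc) two_pos
  · exact div_pos (mul_pos hκ' hc) two_pos
  · gcongr

theorem two_mul_lt_cothTerm {c κ : ℝ} (hc : 0 < c) (hκ : 0 < κ) : 2 * κ < cothTerm c κ := by
  have := lt_mulCoth (div_pos (mul_pos hκ hc) two_pos)
  rw [cothTerm_eq_mulCoth hc.ne']
  calc 2 * κ = 4 / c * (κ * c / 2) := by field_simp; ring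
    _ < _ := by gcongr

theorem cothTerm_le {c κ : ℝ} (hc : 0 < c) (hκ : 0 < κ) : cothTerm c κ ≤ 4 / c + 2 * κ := by
  have := mulCoth_le_one_add (div_pos (mul_pos hκ hc) two_pos)
  rw [cothTerm_eq_mulCoth hc.ne']
  calc _ ≤ 4 / c * (1 + κ * c / 2) := by gcongr
    _ = 4 / c + 2 * κ := by field_simp; ring

theorem stmt_5 (a b γ : ℝ) (ha : 0 < a) (hb : 0 < b)
    (hγ : γ < -4 * (1 / a + 1 / b)) :
    ∃! κ : ℝ, 0 < κ ∧ γ / (2 * κ) =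
      -(Real.cosh (κ * a / 2) / Real.sinh (κ * a / 2)) -
        Real.cosh (κ * b / 2) / Real.sinh (κ * b / 2) := by
  set F : ℝ → ℝ := fun κ => cothTerm a κ + cothTerm b κ
  have hequiv : ∀ κ, (0 < κ ∧ γ / (2 * κ) =
      -(cosh (κ * a / 2) / sinh (κ * a / 2)) - cosh (κ * b / 2) / sinh (κ * b / 2)) ↔
      κ ∈ Ioi 0 ∧ F κ = -γ := by
    refine fun κ => and_congr_right fun hκ => ?_
    rw [div_eq_iff (by positivity)]
    simp only [F, cothTerm]
    constructor <;> intro h <;> linarith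
  rw [existsUnique_congr hequiv]
  set δ := -γ - (4 / a + 4 / b)
  have hδ : 0 < δ := by
    simp only [δ]
    linarith [show -4 * (1 / a + 1 / b) = -(4 / a + 4 / b) by ring]
  have hlow : F (δ / 8) ≤ -γ := by
    have := cothTerm_le ha (by positivity : 0 < δ / 8)
    have := cothTerm_le hb (by positivity : 0 < δ / 8)
    linarith
  have hγneg : 0 < -γ / 4 := by linarith [show 0 < 4 / a + 4 / b by positivity]
  have hhigh : -γ ≤ F (-γ / 4) := by linarith [two_mul_lt_cothTerm ha hγneg, two_mul_lt_cothTerm hb hγneg]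
  exact isPreconnected_Ioi.existsUnique_eq_of_injOn
    ((continuousOn_cothTerm ha).add (continuousOn_cothTerm hb))
    ((strictMonoOn_cothTerm ha).add (strictMonoOn_cothTerm hb)).injOn
    (by simp only [mem_Ioi]; positivity) hγneg ⟨hlow, hhigh⟩
end

section
/- Let a,b>0, γ∈ℝ, γ_* := −4(1/a+1/b), and define P_γ := {k>0 : sin(kb)=0, or (sin(kb)≠0 and |γ·sin(ka)/(2k) + sin(k(a+b))/sin(kb)| ≤ 1 + |sin(ka)/sin(kb)|)}. Then: (i) if γ_* < γ ≤ 0, the infimum of P_γ equals 0; (ii) if γ > 0 or γ ≤ γ_*, the infimum of P_γ is strictly positive. -/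
/-! For `0 < ka, kb < π`, multiplying the band condition by `sin (kb) > 0` and using
`1 - cos x = tan (x/2) sin x`, `1 + cos x = cot (x/2) sin x` turns it into
`-2k (cot (ka/2) + cot (kb/2)) ≤ γ ≤ 2k (tan (ka/2) + tan (kb/2))`.
As `k → 0⁺` the upper bound tends to `0`, while the lower bound stays above `γ_*`
(because `u cot u < 1`) and tends to it (because `u cot u ≥ cos u`). So for `γ_* < γ ≤ 0` every
small `k` lies in `P_γ`, and for `γ > 0` or `γ ≤ γ_*` none does; `π / b ∈ P_γ` keeps `sInf`
away from its junk value on the empty set. -/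

open Real Set Filter Topology

theorem one_sub_cos_eq_tan_half_mul_sin {x : ℝ} (hx : cos (x / 2) ≠ 0) :
    1 - cos x = tan (x / 2) * sin x := by
  obtain ⟨t, rfl⟩ : ∃ t, x = 2 * t := ⟨x / 2, by ring⟩
  rw [mul_div_cancel_left₀ t two_ne_zero] at hx ⊢
  rw [cos_two_mul, sin_two_mul, tan_eq_sin_div_cos]
  field_simp
  linear_combination -2 * sin_sq_add_cos_sq t

theorem one_add_cos_eq_cot_half_mul_sin {x : ℝ} (hx : sin (x / 2) ≠ 0) :
    1 + cos x = cot (x / 2) * sin x := by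
  obtain ⟨t, rfl⟩ : ∃ t, x = 2 * t := ⟨x / 2, by ring⟩
  rw [mul_div_cancel_left₀ t two_ne_zero] at hx ⊢
  rw [cos_two_mul, sin_two_mul, cot_eq_cos_div_sin]
  field_simp
  ring

theorem abs_mul_add_div_le_one_add_abs_div_iff {c p q S : ℝ} (hq : 0 < q) :
    |c * p + S / q| ≤ 1 + |p / q| ↔ |c * p * q + S| ≤ q + |p| := by
  have hlhs : c * p + S / q = (c * p * q + S) / q := by field_simp
  have hrhs : 1 + |p / q| = (q + |p|) / q := by
    rw [abs_div, abs_of_pos hq]; field_simp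
  rw [hlhs, hrhs, abs_div, abs_of_pos hq, div_le_div_iff_of_pos_right hq]

theorem abs_mul_sin_add_div_sin_le_iff {c x y : ℝ} (hx : 0 < x) (hx' : x < π)
    (hy : 0 < y) (hy' : y < π) :
    |c * sin x + sin (x + y) / sin y| ≤ 1 + |sin x / sin y| ↔
      -(cot (x / 2) + cot (y / 2)) ≤ c ∧ c ≤ tan (x / 2) + tan (y / 2) := by
  have hsx : 0 < sin x := sin_pos_of_pos_of_lt_pi hx hx'
  have hsy : 0 < sin y := sin_pos_of_pos_of_lt_pi hy hy'
  have hcx : cos (x / 2) ≠ 0 := (cos_pos_of_mem_Ioo ⟨by linarith, by linarith⟩).ne'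
  have hcy : cos (y / 2) ≠ 0 := (cos_pos_of_mem_Ioo ⟨by linarith, by linarith⟩).ne'
  have hsx' : sin (x / 2) ≠ 0 := (sin_pos_of_pos_of_lt_pi (by linarith) (by linarith)).ne'
  have hsy' : sin (y / 2) ≠ 0 := (sin_pos_of_pos_of_lt_pi (by linarith) (by linarith)).ne'
  have hlower : c * sin x * sin y + sin (x + y) + (sin y + sin x) =
      sin x * sin y * (cot (x / 2) + cot (y / 2) + c) := by
    rw [sin_add]
    linear_combination sin x * one_add_cos_eq_cot_half_mul_sin hsy' +
      sin y * one_add_cos_eq_cot_half_mul_sin hsx'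
  have hupper : sin y + sin x - (c * sin x * sin y + sin (x + y)) =
      sin x * sin y * (tan (x / 2) + tan (y / 2) - c) := by
    rw [sin_add]
    linear_combination sin x * one_sub_cos_eq_tan_half_mul_sin hcy +
      sin y * one_sub_cos_eq_tan_half_mul_sin hcx
  have hxy : 0 < sin x * sin y := mul_pos hsx hsy
  rw [abs_mul_add_div_le_one_add_abs_div_iff hsy, abs_of_pos hsx, abs_le]
  refine and_congr ?_ ?_
  · rw [neg_le_iff_add_nonneg, hlower, mul_nonneg_iff_of_pos_left hxy,
      neg_le_iff_add_nonneg']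
  · rw [← sub_nonneg, hupper, mul_nonneg_iff_of_pos_left hxy, sub_nonneg]

theorem mul_cot_lt_one {u : ℝ} (h0 : 0 < u) (h1 : u < π / 2) : u * cot u < 1 := by
  have hsin : 0 < sin u := sin_pos_of_pos_of_lt_pi h0 (by linarith [pi_pos])
  have hcos : 0 < cos u := cos_pos_of_mem_Ioo ⟨by linarith, h1⟩
  have htan := lt_tan h0 h1
  rw [tan_eq_sin_div_cos, lt_div_iff₀ hcos] at htan
  rwa [cot_eq_cos_div_sin, mul_div_assoc', div_lt_one hsin]

theorem cos_le_mul_cot {u : ℝ} (h0 : 0 < u) (h1 : u ≤ π / 2) : cos u ≤ u * cot u := by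
  have hsin : 0 < sin u := sin_pos_of_pos_of_lt_pi h0 (by linarith [pi_pos])
  have hcos : 0 ≤ cos u := cos_nonneg_of_mem_Icc ⟨by linarith, h1⟩
  rw [cot_eq_cos_div_sin, mul_div_assoc', le_div_iff₀ hsin, mul_comm u]
  exact mul_le_mul_of_nonneg_left (sin_le h0.le) hcos

def bandSet (a b γ : ℝ) : Set ℝ :=
  {k : ℝ | 0 < k ∧ (sin (k * b) = 0 ∨
      (sin (k * b) ≠ 0 ∧
        |γ * sin (k * a) / (2 * k) + sin (k * (a + b)) / sin (k * b)| ≤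
          1 + |sin (k * a) / sin (k * b)|))}

noncomputable def lowerCoupling (a b k : ℝ) : ℝ := -(cot (k * a / 2) + cot (k * b / 2)) * (2 * k)

noncomputable def upperCoupling (a b k : ℝ) : ℝ := (tan (k * a / 2) + tan (k * b / 2)) * (2 * k)

section RectangularLattice

variable {a b γ k : ℝ}

theorem pi_div_mem_bandSet (hb : 0 < b) : π / b ∈ bandSet a b γ :=
  ⟨by positivity, Or.inl (by rw [div_mul_cancel₀ π hb.ne', sin_pi])⟩

theorem mem_bandSet_iff (ha : 0 < a) (hb : 0 < b) (hk : 0 < k) (hka : k * a < π)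
    (hkb : k * b < π) :
    k ∈ bandSet a b γ ↔ lowerCoupling a b k ≤ γ ∧ γ ≤ upperCoupling a b k := by
  have hsin : sin (k * b) ≠ 0 := (sin_pos_of_pos_of_lt_pi (by positivity) hkb).ne'
  have h2k : 0 < 2 * k := by positivity
  simp only [bandSet, mem_ofPred_eq, hk, hsin, ne_eq, not_false_eq_true, true_and, false_or]
  rw [mul_div_right_comm, mul_add,
    abs_mul_sin_add_div_sin_le_iff (by positivity) hka (by positivity) hkb,
    le_div_iff₀ h2k, div_le_iff₀ h2k, lowerCoupling, upperCoupling]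

theorem eventually_pos_mul_lt_pi (a b : ℝ) :
    ∀ᶠ k in 𝓝[>] (0 : ℝ), 0 < k ∧ k * a < π ∧ k * b < π := by
  have hsmall (c : ℝ) : ∀ᶠ k in 𝓝 (0 : ℝ), k * c < π :=
    ((continuous_mul_const c).tendsto' 0 0 (zero_mul c)).eventually (gt_mem_nhds pi_pos)
  filter_upwards [self_mem_nhdsWithin, nhdsWithin_le_nhds (hsmall a),
    nhdsWithin_le_nhds (hsmall b)] with k hk hka hkb using ⟨hk, hka, hkb⟩

theorem upperCoupling_nonneg (ha : 0 < a) (hb : 0 < b) (hk : 0 < k) (hka : k * a < π)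
    (hkb : k * b < π) : 0 ≤ upperCoupling a b k := by
  have hta := tan_pos_of_pos_of_lt_pi_div_two (x := k * a / 2) (by positivity) (by linarith)
  have htb := tan_pos_of_pos_of_lt_pi_div_two (x := k * b / 2) (by positivity) (by linarith)
  unfold upperCoupling
  positivity

theorem tendsto_upperCoupling (a b : ℝ) :
    Tendsto (upperCoupling a b) (𝓝 0) (𝓝 0) := by
  have htan (c : ℝ) : ContinuousAt (fun k : ℝ => tan (k * c / 2)) 0 :=
    (continuousAt_tan.2 (by simp)).comp (by fun_prop)
  have hcont : ContinuousAt (upperCoupling a b) 0 :=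
    ((htan a).add (htan b)).mul (by fun_prop)
  simpa [upperCoupling] using hcont.tendsto

theorem lowerCoupling_eq (ha : a ≠ 0) (hb : b ≠ 0) :
    lowerCoupling a b k =
      -(4 / a) * (k * a / 2 * cot (k * a / 2)) - 4 / b * (k * b / 2 * cot (k * b / 2)) := by
  unfold lowerCoupling
  field_simp
  ring

theorem neg_four_mul_lt_lowerCoupling (ha : 0 < a) (hb : 0 < b) (hk : 0 < k)
    (hka : k * a < π) (hkb : k * b < π) :
    -4 * (1 / a + 1 / b) < lowerCoupling a b k := by
  have hca := mul_lt_mul_of_pos_left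
    (mul_cot_lt_one (u := k * a / 2) (by positivity) (by linarith)) (by positivity : 0 < 4 / a)
  have hcb := mul_lt_mul_of_pos_left
    (mul_cot_lt_one (u := k * b / 2) (by positivity) (by linarith)) (by positivity : 0 < 4 / b)
  rw [lowerCoupling_eq ha.ne' hb.ne', show -4 * (1 / a + 1 / b) = -(4 / a) - 4 / b by ring]
  linarith

theorem lowerCoupling_le (ha : 0 < a) (hb : 0 < b) (hk : 0 < k) (hka : k * a < π)
    (hkb : k * b < π) :
    lowerCoupling a b k ≤ -(4 / a) * cos (k * a / 2) - 4 / b * cos (k * b / 2) := by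
  have hca := mul_le_mul_of_nonneg_left
    (cos_le_mul_cot (u := k * a / 2) (by positivity) (by linarith)) (by positivity : 0 ≤ 4 / a)
  have hcb := mul_le_mul_of_nonneg_left
    (cos_le_mul_cot (u := k * b / 2) (by positivity) (by linarith)) (by positivity : 0 ≤ 4 / b)
  rw [lowerCoupling_eq ha.ne' hb.ne']
  linarith

theorem eventually_lowerCoupling_le (ha : 0 < a) (hb : 0 < b) (hγ : -4 * (1 / a + 1 / b) < γ) :
    ∀ᶠ k in 𝓝[>] (0 : ℝ), lowerCoupling a b k ≤ γ := by
  have hlim : Tendsto (fun k => -(4 / a) * cos (k * a / 2) - 4 / b * cos (k * b / 2)) (𝓝 0)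
      (𝓝 (-4 * (1 / a + 1 / b))) := by
    convert (by fun_prop : Continuous
      (fun k => -(4 / a) * cos (k * a / 2) - 4 / b * cos (k * b / 2))).tendsto 0 using 2
    simp only [zero_mul, zero_div, cos_zero]
    ring
  filter_upwards [eventually_pos_mul_lt_pi a b,
    nhdsWithin_le_nhds (hlim.eventually (gt_mem_nhds hγ))] with k ⟨hk, hka, hkb⟩ hlt
  exact (lowerCoupling_le ha hb hk hka hkb).trans hlt.le

end RectangularLattice

theorem csInf_eq_zero_of_eventually_mem {S : Set ℝ} (hS : S ⊆ Ici 0)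
    (h : ∀ᶠ k in 𝓝[>] (0 : ℝ), k ∈ S) : sInf S = 0 := by
  obtain ⟨ε, hε, hsub⟩ := mem_nhdsGT_iff_exists_Ioo_subset.1 h
  have hglb : IsGLB S 0 :=
    ⟨fun k hk => hS hk, fun l hl => (isGLB_Ioo hε).2 fun k hk => hl (hsub hk)⟩
  exact hglb.csInf_eq ⟨ε / 2, hsub ⟨half_pos hε, half_lt_self hε⟩⟩

theorem csInf_pos_of_eventually_notMem {S : Set ℝ} (hS : S ⊆ Ioi 0) (hne : S.Nonempty)
    (h : ∀ᶠ k in 𝓝[>] (0 : ℝ), k ∉ S) : 0 < sInf S := by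
  obtain ⟨ε, hε, hsub⟩ := mem_nhdsGT_iff_exists_Ioo_subset.1 h
  exact hε.trans_le (le_csInf hne fun k hk => not_lt.1 fun hkε => hsub ⟨hS hk, hkε⟩ hk)

theorem stmt_7 (a b γ : ℝ) (ha : 0 < a) (hb : 0 < b)
    (P : Set ℝ)
    (hP : P = {k : ℝ | 0 < k ∧ (Real.sin (k * b) = 0 ∨
      (Real.sin (k * b) ≠ 0 ∧
        |γ * Real.sin (k * a) / (2 * k) + Real.sin (k * (a + b)) / Real.sin (k * b)| ≤
          1 + |Real.sin (k * a) / Real.sin (k * b)|))}) :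
    (-4 * (1 / a + 1 / b) < γ → γ ≤ 0 → sInf P = 0) ∧
    ((0 < γ ∨ γ ≤ -4 * (1 / a + 1 / b)) → 0 < sInf P) := by
  obtain rfl : P = bandSet a b γ := hP
  have hsmall := eventually_pos_mul_lt_pi a b
  refine ⟨fun hγ_gt hγ_nonpos => ?_, fun hγ => ?_⟩
  · refine csInf_eq_zero_of_eventually_mem (fun k hk => le_of_lt hk.1) ?_
    filter_upwards [hsmall, eventually_lowerCoupling_le ha hb hγ_gt] with k ⟨hk, hka, hkb⟩ hlow
    exact (mem_bandSet_iff ha hb hk hka hkb).2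
      ⟨hlow, hγ_nonpos.trans (upperCoupling_nonneg ha hb hk hka hkb)⟩
  refine csInf_pos_of_eventually_notMem (fun k hk => hk.1) ⟨π / b, pi_div_mem_bandSet hb⟩ ?_
  rcases hγ with hγ_pos | hγ_le
  · filter_upwards [hsmall,
      nhdsWithin_le_nhds ((tendsto_upperCoupling a b).eventually (gt_mem_nhds hγ_pos))]
      with k ⟨hk, hka, hkb⟩ hup hmem
    exact ((mem_bandSet_iff ha hb hk hka hkb).1 hmem).2.not_gt hup
  · filter_upwards [hsmall] with k ⟨hk, hka, hkb⟩ hmem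
    exact (hγ_le.trans_lt (neg_four_mul_lt_lowerCoupling ha hb hk hka hkb)).not_ge
      ((mem_bandSet_iff ha hb hk hka hkb).1 hmem).1
end

section
/- Let f,g∈ℝ with |f|>1. There exists a not-identically-zero square-summable sequence (ν_j)_{j∈ℤ} of real numbers satisfying ν_{j+1} − 2f·ν_j + ν_{j−1} = 0 for all j≠0 and ν_1 − 2g·ν_0 + ν_{−1} = 0, if and only if either (f < −1 and g = f + √(f²−1)) or (f > 1 and g = f − √(f²−1)). -/
/-!
Let `r` be the root of `r ^ 2 - 2 f r + 1 = 0` with `|r| < 1`; the other root is `1 / r`.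
On each half-line `u (n + 1) - r u n` is multiplied by `1 / r` at every step, so it can only tend
to `0` if it vanishes identically. Hence a square-summable solution is `ν j = ν 0 * r ^ |j|`, with
`ν 0 ≠ 0`, and the equation at `j = 0` reads `2 (r - g) ν 0 = 0`, i.e. `g = r`. Conversely
`r ^ |j|` is a square-summable solution when `g = r`.
-/

open Filter Topology

def IsBoundState (f g : ℝ) (ν : ℤ → ℝ) : Prop :=
  ν ≠ 0 ∧ Summable (fun j : ℤ => (ν j) ^ 2) ∧
    (∀ j : ℤ, j ≠ 0 → ν (j + 1) - 2 * f * ν j + ν (j - 1) = 0) ∧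
    ν 1 - 2 * g * ν 0 + ν (-1) = 0

lemma tendsto_zero_of_summable_sq {u : ℕ → ℝ} (h : Summable fun n => u n ^ 2) :
    Tendsto u atTop (𝓝 0) := by
  rw [tendsto_zero_iff_abs_tendsto_zero]
  simpa [Real.sqrt_sq_eq_abs, Function.comp_def] using h.tendsto_atTop_zero.sqrt

lemma eq_zero_of_eq_mul_succ {r : ℝ} {w : ℕ → ℝ} (hr : |r| ≤ 1) (hw : ∀ n, w n = r * w (n + 1))
    (hlim : Tendsto w atTop (𝓝 0)) : w = 0 := by
  have hpow : ∀ m n, w m = r ^ n * w (n + m) := by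
    intro m n
    induction n with
    | zero => simp
    | succ n ih => rw [ih, hw (n + m), add_right_comm]; ring
  funext m
  have hle : ∀ n, |w m| ≤ |w (n + m)| := fun n => by
    rw [hpow m n, abs_mul, abs_pow]
    exact mul_le_of_le_one_left (abs_nonneg _) (pow_le_one₀ (abs_nonneg r) hr)
  have hlim' : Tendsto (fun n => |w (n + m)|) atTop (𝓝 0) := by
    simpa using (hlim.comp (tendsto_add_atTop_nat m)).abs
  exact abs_nonpos_iff.mp (ge_of_tendsto' hlim' hle)

lemma eq_mul_pow_of_tendsto_zero {f r : ℝ} {u : ℕ → ℝ} (hroot : r ^ 2 - 2 * f * r + 1 = 0)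
    (hr : |r| ≤ 1) (hrec : ∀ n, u (n + 2) - 2 * f * u (n + 1) + u n = 0)
    (hlim : Tendsto u atTop (𝓝 0)) (n : ℕ) : u n = u 0 * r ^ n := by
  have hw : ∀ n, u (n + 1) - r * u n = 0 := congrFun <| by
    refine eq_zero_of_eq_mul_succ hr (fun n => ?_) ?_
    · linear_combination (-r) * hrec n + u (n + 1) * hroot
    · simpa using (hlim.comp (tendsto_add_atTop_nat 1)).sub (hlim.const_mul r)
  induction n with
  | zero => simp
  | succ n ih =>
    rw [pow_succ]
    linear_combination hw n + r * ih

lemma eq_mul_pow_natAbs_of_summable_sq {f r : ℝ} {ν : ℤ → ℝ}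
    (hroot : r ^ 2 - 2 * f * r + 1 = 0) (hr : |r| ≤ 1) (hsum : Summable fun j => ν j ^ 2)
    (hrec : ∀ j : ℤ, j ≠ 0 → ν (j + 1) - 2 * f * ν j + ν (j - 1) = 0) (j : ℤ) :
    ν j = ν 0 * r ^ j.natAbs := by
  obtain ⟨hpos, hneg⟩ := summable_int_iff_summable_nat_and_neg.mp hsum
  obtain ⟨n, rfl | rfl⟩ := Int.eq_nat_or_neg j
  · refine eq_mul_pow_of_tendsto_zero (u := fun n : ℕ => ν n) hroot hr (fun n => ?_)
      (tendsto_zero_of_summable_sq hpos) n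
    have := hrec (n + 1) (by omega)
    rw [show (n : ℤ) + 1 + 1 = n + 2 by ring, add_sub_cancel_right] at this
    push_cast
    linear_combination this
  · have hrec' : ∀ n : ℕ, ν (-↑(n + 2)) - 2 * f * ν (-↑(n + 1)) + ν (-n) = 0 := fun n => by
      have := hrec (-(n + 1)) (by omega)
      rw [show -((n : ℤ) + 1) + 1 = -n by ring, show -((n : ℤ) + 1) - 1 = -(n + 2) by ring] at this
      push_cast
      linear_combination this
    simpa using eq_mul_pow_of_tendsto_zero (u := fun n : ℕ => ν (-n)) hroot hr hrec'
      (tendsto_zero_of_summable_sq hneg) n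

lemma summable_sq_pow_natAbs {r : ℝ} (hr : |r| < 1) : Summable fun j : ℤ => (r ^ j.natAbs) ^ 2 := by
  have hgeo : Summable fun n : ℕ => (r ^ 2) ^ n :=
    summable_geometric_of_lt_one (sq_nonneg r) (by simpa [sq_lt_one_iff_abs_lt_one] using hr)
  simp_rw [← pow_mul, mul_comm _ 2, pow_mul]
  exact summable_int_iff_summable_nat_and_neg.mpr ⟨by simpa using hgeo, by simpa using hgeo⟩

lemma pow_natAbs_recurrence {f r : ℝ} (hroot : r ^ 2 - 2 * f * r + 1 = 0) {j : ℤ} (hj : j ≠ 0) :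
    r ^ (j + 1).natAbs - 2 * f * r ^ j.natAbs + r ^ (j - 1).natAbs = 0 := by
  obtain ⟨n, rfl | rfl⟩ : ∃ n : ℕ, j = n + 1 ∨ j = -(n + 1) := by
    obtain ⟨n, rfl | rfl⟩ := Int.eq_nat_or_neg j <;> exact ⟨n - 1, by omega⟩
  · rw [show ((n : ℤ) + 1 + 1).natAbs = n + 2 by omega, show ((n : ℤ) + 1).natAbs = n + 1 by omega,
      show ((n : ℤ) + 1 - 1).natAbs = n by omega]
    linear_combination r ^ n * hroot
  · rw [show (-((n : ℤ) + 1) + 1).natAbs = n by omega,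
      show (-((n : ℤ) + 1)).natAbs = n + 1 by omega, show (-((n : ℤ) + 1) - 1).natAbs = n + 2 by omega]
    linear_combination r ^ n * hroot

theorem exists_isBoundState_iff {f g r : ℝ} (hroot : r ^ 2 - 2 * f * r + 1 = 0) (hr : |r| < 1) :
    (∃ ν, IsBoundState f g ν) ↔ g = r := by
  constructor
  · rintro ⟨ν, hν, hsum, hrec, hzero⟩
    have hprofile := eq_mul_pow_natAbs_of_summable_sq hroot hr.le hsum hrec
    have hν0 : ν 0 ≠ 0 := fun h => hν (funext fun j => by simp [hprofile j, h])
    rw [hprofile 1, hprofile (-1), Int.natAbs_neg, Int.natAbs_one, pow_one] at hzero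
    refine (mul_left_cancel₀ hν0 ?_).symm
    linear_combination (1 / 2 : ℝ) * hzero
  · rintro rfl
    refine ⟨fun j => g ^ j.natAbs, fun h => by simpa using congrFun h 0,
      summable_sq_pow_natAbs hr, fun j hj => pow_natAbs_recurrence hroot hj, ?_⟩
    simp only [Int.natAbs_one, Int.natAbs_zero, Int.natAbs_neg]
    ring

theorem stmt_8 (f g : ℝ) (hf : 1 < |f|) :
    (∃ ν : ℤ → ℝ, ν ≠ 0 ∧ Summable (fun j : ℤ => (ν j) ^ 2) ∧
        (∀ j : ℤ, j ≠ 0 → ν (j + 1) - 2 * f * ν j + ν (j - 1) = 0) ∧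
        ν 1 - 2 * g * ν 0 + ν (-1) = 0) ↔
      ((f < -1 ∧ g = f + Real.sqrt (f ^ 2 - 1)) ∨
        (1 < f ∧ g = f - Real.sqrt (f ^ 2 - 1))) := by
  change (∃ ν, IsBoundState f g ν) ↔ _
  set s := √(f ^ 2 - 1)
  have hs0 : 0 ≤ s := Real.sqrt_nonneg _
  have hs : s ^ 2 = f ^ 2 - 1 := Real.sq_sqrt (by nlinarith [sq_abs f])
  rcases lt_abs.mp hf with hpos | hneg
  · rw [exists_isBoundState_iff (r := f - s) (by linear_combination hs)
      (abs_lt.mpr ⟨by nlinarith, by nlinarith⟩)]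
    simp [hpos, show ¬ f < -1 by linarith]
  · rw [exists_isBoundState_iff (r := f + s) (by linear_combination hs)
      (abs_lt.mpr ⟨by nlinarith, by nlinarith⟩)]
    simp [show f < -1 by linarith, show ¬ 1 < f by linarith]
end

section
/- Let a,b>0, γ,γ̃∈ℝ, and k>0 with sin(ka)≠0 and sin(kb)≠0. For c∈ℝ and τ∈[−1,1] set f_c^τ(k) := c·sin(ka)/(2k) + sin(k(a+b))/sin(kb) − τ·sin(ka)/sin(kb), and set G(k) := (γ̃−γ)·sin(ka)/(2k). Then the following are equivalent: (i) there exists τ∈[−1,1] such that either (f_γ^τ(k) < −1 and f_{γ̃}^τ(k) = f_γ^τ(k) + √((f_γ^τ(k))²−1)) or (f_γ^τ(k) > 1 and f_{γ̃}^τ(k) = f_γ^τ(k) − √((f_γ^τ(k))²−1)); (ii) either (|sin(k(a+b))/sin(kb) + γ·sin(ka)/(2k) + √(G(k)²+1)| ≤ |sin(ka)/sin(kb)| and G(k) > 0), or (|sin(k(a+b))/sin(kb) + γ·sin(ka)/(2k) − √(G(k)²+1)| ≤ |sin(ka)/sin(kb)| and G(k) < 0). -/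
open Real Set

/-!
Since `f γ' τ = f γ τ + G`, condition (i) says that `G = ±√(x² - 1)` for `x = f γ τ` on the
correct side of `±1`, which pins `x` down as `∓√(G² + 1)` (with `G` of the matching sign).
As `τ` ranges over `[-1, 1]`, `f γ τ = A - τ s` (with `s = sin(ka)/sin(kb)`) sweeps exactly the
interval of radius `|s|` around its value `A` at `τ = 0`, which is condition (ii).
-/

theorem exists_mem_Icc_sub_mul_eq_iff (A s y : ℝ) :
    (∃ τ ∈ Icc (-1 : ℝ) 1, A - τ * s = y) ↔ |A - y| ≤ |s| := by
  constructor
  · rintro ⟨τ, hτ, rfl⟩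
    rw [sub_sub_cancel, abs_mul]
    exact mul_le_of_le_one_left (abs_nonneg s) (abs_le.2 hτ)
  · intro h
    rcases eq_or_ne s 0 with rfl | hs
    · exact ⟨0, by norm_num, by simpa [sub_eq_zero] using h⟩
    · refine ⟨(A - y) / s, abs_le.1 ?_, by rw [div_mul_cancel₀ _ hs, sub_sub_cancel]⟩
      rwa [abs_div, div_le_one (abs_pos.2 hs)]

theorem lt_neg_one_and_eq_sqrt_iff (x G : ℝ) :
    (x < -1 ∧ G = √(x ^ 2 - 1)) ↔ (x = -√(G ^ 2 + 1) ∧ 0 < G) := by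
  constructor
  · rintro ⟨hx, rfl⟩
    have hpos : 0 < x ^ 2 - 1 := by nlinarith
    refine ⟨?_, sqrt_pos.2 hpos⟩
    rw [sq_sqrt hpos.le, sub_add_cancel, sqrt_sq_eq_abs, abs_of_neg (by linarith), neg_neg]
  · rintro ⟨rfl, hG⟩
    have hone : 1 < √(G ^ 2 + 1) := by rw [lt_sqrt zero_le_one]; nlinarith
    refine ⟨by linarith, ?_⟩
    rw [neg_sq, sq_sqrt (by positivity), add_sub_cancel_right, sqrt_sq hG.le]

theorem one_lt_and_eq_neg_sqrt_iff (x G : ℝ) :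
    (1 < x ∧ G = -√(x ^ 2 - 1)) ↔ (x = √(G ^ 2 + 1) ∧ G < 0) := by
  simpa only [neg_sq, neg_lt_neg_iff, neg_eq_iff_eq_neg, neg_inj, neg_pos, neg_neg] using
    lt_neg_one_and_eq_sqrt_iff (-x) (-G)

theorem stmt_9_general (a b γ γ' k : ℝ)
    (f : ℝ → ℝ → ℝ)
    (hf : f = fun c τ => c * Real.sin (k * a) / (2 * k) +
        Real.sin (k * (a + b)) / Real.sin (k * b) - τ * Real.sin (k * a) / Real.sin (k * b))
    (G : ℝ) (hG : G = (γ' - γ) * Real.sin (k * a) / (2 * k)) :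
    (∃ τ ∈ Set.Icc (-1 : ℝ) 1,
        (f γ τ < -1 ∧ f γ' τ = f γ τ + Real.sqrt ((f γ τ) ^ 2 - 1)) ∨
          (1 < f γ τ ∧ f γ' τ = f γ τ - Real.sqrt ((f γ τ) ^ 2 - 1))) ↔
      ((|Real.sin (k * (a + b)) / Real.sin (k * b) + γ * Real.sin (k * a) / (2 * k) +
            Real.sqrt (G ^ 2 + 1)| ≤ |Real.sin (k * a) / Real.sin (k * b)| ∧ 0 < G) ∨
        (|Real.sin (k * (a + b)) / Real.sin (k * b) + γ * Real.sin (k * a) / (2 * k) -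
            Real.sqrt (G ^ 2 + 1)| ≤ |Real.sin (k * a) / Real.sin (k * b)| ∧ G < 0)) := by
  set A := Real.sin (k * (a + b)) / Real.sin (k * b) + γ * Real.sin (k * a) / (2 * k)
  set s := Real.sin (k * a) / Real.sin (k * b)
  have hfγ : ∀ τ, f γ τ = A - τ * s := fun τ => by subst hf; ring
  have hfγ' : ∀ τ, f γ' τ = f γ τ + G := fun τ => by subst hf hG; ring
  simp only [hfγ', add_right_inj, sub_eq_add_neg (f γ _)]
  simp only [lt_neg_one_and_eq_sqrt_iff, one_lt_and_eq_neg_sqrt_iff, hfγ]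
  simp only [and_or_left, exists_or, ← and_assoc, exists_and_right, exists_mem_Icc_sub_mul_eq_iff,
    sub_neg_eq_add]

theorem stmt_9 (a b γ γ' k : ℝ) (ha : 0 < a) (hb : 0 < b) (hk : 0 < k)
    (hsa : Real.sin (k * a) ≠ 0) (hsb : Real.sin (k * b) ≠ 0)
    (f : ℝ → ℝ → ℝ)
    (hf : f = fun c τ => c * Real.sin (k * a) / (2 * k) +
        Real.sin (k * (a + b)) / Real.sin (k * b) - τ * Real.sin (k * a) / Real.sin (k * b))
    (G : ℝ) (hG : G = (γ' - γ) * Real.sin (k * a) / (2 * k)) :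
    (∃ τ ∈ Set.Icc (-1 : ℝ) 1,
        (f γ τ < -1 ∧ f γ' τ = f γ τ + Real.sqrt ((f γ τ) ^ 2 - 1)) ∨
          (1 < f γ τ ∧ f γ' τ = f γ τ - Real.sqrt ((f γ τ) ^ 2 - 1))) ↔
      ((|Real.sin (k * (a + b)) / Real.sin (k * b) + γ * Real.sin (k * a) / (2 * k) +
            Real.sqrt (G ^ 2 + 1)| ≤ |Real.sin (k * a) / Real.sin (k * b)| ∧ 0 < G) ∨
        (|Real.sin (k * (a + b)) / Real.sin (k * b) + γ * Real.sin (k * a) / (2 * k) -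
            Real.sqrt (G ^ 2 + 1)| ≤ |Real.sin (k * a) / Real.sin (k * b)| ∧ G < 0)) :=
  stmt_9_general a b γ γ' k f hf G hG
end

section
/- Let a,b>0 and γ,γ̃∈ℝ with either γ̃>γ>0 or γ̃<γ<0, and set G(k) := (γ̃−γ)·sin(ka)/(2k). Then there is no k>0 with sin(ka)≠0 and sin(kb)≠0 satisfying simultaneously the gap condition |γ·sin(ka)/(2k) + sin(k(a+b))/sin(kb)| > 1 + |sin(ka)/sin(kb)| and the perturbed positive band condition, i.e. either (|sin(k(a+b))/sin(kb) + γ·sin(ka)/(2k) + √(G(k)²+1)| ≤ |sin(ka)/sin(kb)| and G(k) > 0) or (|sin(k(a+b))/sin(kb) + γ·sin(ka)/(2k) − √(G(k)²+1)| ≤ |sin(ka)/sin(kb)| and G(k) < 0). -/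
/-! The ratio `sin (k (a + b)) / sin (k b) = (sin (k a) / sin (k b)) cos (k b) + cos (k a)` is
bounded in modulus by `1 + |sin (k a) / sin (k b)|`, so a gap energy needs the coupling term
`u = γ sin (k a) / (2k)` to push the sum past that bound. Since `γ` and `γ' - γ` have the same
sign, `u` has the sign of `G k`, and adding `± √(G k ² + 1)`, of modulus at least `1`, in that
same direction moves the sum even further out, which the band condition forbids. -/

open Real

lemma abs_sin_add_div_sin_le (x y : ℝ) : |sin (x + y) / sin y| ≤ 1 + |sin x / sin y| := by
  by_cases hy : sin y = 0
  · simp [hy]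
  have hsplit : sin (x + y) / sin y = sin x / sin y * cos y + cos x := by
    rw [sin_add]
    field_simp
  calc |sin (x + y) / sin y|
      ≤ |sin x / sin y| * |cos y| + |cos x| := by
        rw [hsplit, ← abs_mul]
        exact abs_add_le _ _
    _ ≤ |sin x / sin y| * 1 + 1 := by
        gcongr
        · exact abs_cos_le_one y
        · exact abs_cos_le_one x
    _ = 1 + |sin x / sin y| := by ring

lemma lt_abs_add_add_of_abs_le_of_lt_abs {c u r s : ℝ} (hc : |c| ≤ 1 + s) (hu : 0 < u)
    (hr : 1 ≤ r) (hgap : 1 + s < |u + c|) : s < |c + u + r| := by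
  have hc_lower := (abs_le.mp hc).1
  rcases lt_abs.mp hgap with hgap | hgap
  · exact lt_abs.mpr (Or.inl (by linarith))
  · linarith

lemma lt_abs_add_sub_of_abs_le_of_lt_abs {c u r s : ℝ} (hc : |c| ≤ 1 + s) (hu : u < 0)
    (hr : 1 ≤ r) (hgap : 1 + s < |u + c|) : s < |c + u - r| := by
  have := lt_abs_add_add_of_abs_le_of_lt_abs (c := -c) (u := -u) (by rwa [abs_neg])
    (neg_pos.mpr hu) hr (by rwa [← neg_add, abs_neg])
  rwa [show -c + -u + r = -(c + u - r) by ring, abs_neg] at this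

lemma pos_mul_of_pos_mul_of_pos_mul {p q t : ℝ} (hpq : 0 < p * q) (hqt : 0 < q * t) :
    0 < p * t := by
  have : 0 < q ^ 2 * (p * t) := by nlinarith
  exact pos_of_mul_pos_right this (sq_nonneg q)

lemma mul_neg_of_pos_mul_of_mul_neg {p q t : ℝ} (hpq : 0 < p * q) (hqt : q * t < 0) :
    p * t < 0 := by
  have := pos_mul_of_pos_mul_of_pos_mul hpq (t := -t) (by linarith)
  linarith

theorem stmt_11_general (a b γ γ' : ℝ)
    (hγ : (γ < γ' ∧ 0 < γ) ∨ (γ' < γ ∧ γ < 0))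
    (G : ℝ → ℝ) (hG : G = fun k => (γ' - γ) * Real.sin (k * a) / (2 * k)) :
    ¬ ∃ k : ℝ, 0 < k ∧ Real.sin (k * a) ≠ 0 ∧ Real.sin (k * b) ≠ 0 ∧
      (1 + |Real.sin (k * a) / Real.sin (k * b)| <
        |γ * Real.sin (k * a) / (2 * k) + Real.sin (k * (a + b)) / Real.sin (k * b)|) ∧
      ((|Real.sin (k * (a + b)) / Real.sin (k * b) + γ * Real.sin (k * a) / (2 * k) +
            Real.sqrt ((G k) ^ 2 + 1)| ≤ |Real.sin (k * a) / Real.sin (k * b)| ∧ 0 < G k) ∨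
        (|Real.sin (k * (a + b)) / Real.sin (k * b) + γ * Real.sin (k * a) / (2 * k) -
            Real.sqrt ((G k) ^ 2 + 1)| ≤ |Real.sin (k * a) / Real.sin (k * b)| ∧ G k < 0)) := by
  rintro ⟨k, -, -, -, hgap, hband⟩
  have hratio := abs_sin_add_div_sin_le (k * a) (k * b)
  rw [← mul_add] at hratio
  have hsqrt : 1 ≤ √(G k ^ 2 + 1) := one_le_sqrt.mpr (le_add_of_nonneg_left (sq_nonneg _))
  have hsign : 0 < γ * (γ' - γ) := by
    rcases hγ with ⟨h₁, h₂⟩ | ⟨h₁, h₂⟩ <;> nlinarith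
  subst hG
  simp only [mul_div_assoc] at hgap hband hsqrt
  rcases hband with ⟨hband, hGpos⟩ | ⟨hband, hGneg⟩
  · have hu := pos_mul_of_pos_mul_of_pos_mul hsign hGpos
    exact (lt_abs_add_add_of_abs_le_of_lt_abs hratio hu hsqrt hgap).not_ge hband
  · have hu := mul_neg_of_pos_mul_of_mul_neg hsign hGneg
    exact (lt_abs_add_sub_of_abs_le_of_lt_abs hratio hu hsqrt hgap).not_ge hband

theorem stmt_11 (a b γ γ' : ℝ) (ha : 0 < a) (hb : 0 < b)
    (hγ : (γ < γ' ∧ 0 < γ) ∨ (γ' < γ ∧ γ < 0))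
    (G : ℝ → ℝ) (hG : G = fun k => (γ' - γ) * Real.sin (k * a) / (2 * k)) :
    ¬ ∃ k : ℝ, 0 < k ∧ Real.sin (k * a) ≠ 0 ∧ Real.sin (k * b) ≠ 0 ∧
      (1 + |Real.sin (k * a) / Real.sin (k * b)| <
        |γ * Real.sin (k * a) / (2 * k) + Real.sin (k * (a + b)) / Real.sin (k * b)|) ∧
      ((|Real.sin (k * (a + b)) / Real.sin (k * b) + γ * Real.sin (k * a) / (2 * k) +
            Real.sqrt ((G k) ^ 2 + 1)| ≤ |Real.sin (k * a) / Real.sin (k * b)| ∧ 0 < G k) ∨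
        (|Real.sin (k * (a + b)) / Real.sin (k * b) + γ * Real.sin (k * a) / (2 * k) -
            Real.sqrt ((G k) ^ 2 + 1)| ≤ |Real.sin (k * a) / Real.sin (k * b)| ∧ G k < 0)) :=
  stmt_11_general a b γ γ' hγ G hG
end

section
/- Let a,b>0, γ,γ̃∈ℝ, κ>0, and set Ĝ(κ) := (γ̃−γ)·sinh(κa)/(2κ). Suppose κ satisfies the gap condition γ·sinh(κa)/(2κ) + sinh(κ(a+b))/sinh(κb) < −1 − sinh(κa)/sinh(κb) together with the perturbed negative band condition, i.e. either (|sinh(κ(a+b))/sinh(κb) + γ·sinh(κa)/(2κ) + √(Ĝ(κ)²+1)| ≤ sinh(κa)/sinh(κb) and Ĝ(κ) > 0) or (|sinh(κ(a+b))/sinh(κb) + γ·sinh(κa)/(2κ) − √(Ĝ(κ)²+1)| ≤ sinh(κa)/sinh(κb) and Ĝ(κ) < 0). Then γ < 0 and γ̃ > γ. -/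
/-!
The gap condition puts `γ sinh(κa)/(2κ)` below `-1` minus positive quantities, so `γ < 0`.
In the `-√(G²+1)` branch of the band condition the same bound would give `√(G²+1) < -1`,
which is absurd; hence the `+√(G²+1)` branch holds, where `G > 0` and `G` has the sign of `γ' - γ`.
-/

open Real Set

lemma neg_of_mul_div_neg {γ s d : ℝ} (hs : 0 ≤ s) (hd : 0 ≤ d) (h : γ * s / d < 0) : γ < 0 := by
  by_contra! hγ
  have : 0 ≤ γ * s / d := by positivity
  linarith

lemma lt_of_sub_mul_div_pos {γ γ' s d : ℝ} (hs : 0 < s) (hd : 0 < d)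
    (h : 0 < (γ' - γ) * s / d) : γ < γ' :=
  sub_pos.1 ((mul_pos_iff_of_pos_right hs).1 ((div_pos_iff_of_pos_right hd).1 h))

lemma lt_abs_sub_sqrt_sq_add_one {x r : ℝ} (G : ℝ) (hx : x < -1 - r) :
    r < |x - √(G ^ 2 + 1)| := by
  have hsqrt : 1 ≤ √(G ^ 2 + 1) := Real.one_le_sqrt.2 (by nlinarith [sq_nonneg G])
  calc r < √(G ^ 2 + 1) - x := by linarith
    _ ≤ |x - √(G ^ 2 + 1)| := by rw [abs_sub_comm]; exact le_abs_self _

theorem stmt_12 (a b γ γ' κ : ℝ) (ha : 0 < a) (hb : 0 < b) (hκ : 0 < κ)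
    (G : ℝ) (hG : G = (γ' - γ) * Real.sinh (κ * a) / (2 * κ))
    (hgap : γ * Real.sinh (κ * a) / (2 * κ) + Real.sinh (κ * (a + b)) / Real.sinh (κ * b) <
      -1 - Real.sinh (κ * a) / Real.sinh (κ * b))
    (hband : (|Real.sinh (κ * (a + b)) / Real.sinh (κ * b) + γ * Real.sinh (κ * a) / (2 * κ) +
          Real.sqrt (G ^ 2 + 1)| ≤ Real.sinh (κ * a) / Real.sinh (κ * b) ∧ 0 < G) ∨
      (|Real.sinh (κ * (a + b)) / Real.sinh (κ * b) + γ * Real.sinh (κ * a) / (2 * κ) -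
          Real.sqrt (G ^ 2 + 1)| ≤ Real.sinh (κ * a) / Real.sinh (κ * b) ∧ G < 0)) :
    γ < 0 ∧ γ < γ' := by
  have hsa : 0 < sinh (κ * a) := sinh_pos_iff.2 (mul_pos hκ ha)
  have hsb : 0 < sinh (κ * b) := sinh_pos_iff.2 (mul_pos hκ hb)
  have hsab : 0 < sinh (κ * (a + b)) := sinh_pos_iff.2 (mul_pos hκ (add_pos ha hb))
  have hS : 0 < sinh (κ * (a + b)) / sinh (κ * b) := div_pos hsab hsb
  have hr : 0 < sinh (κ * a) / sinh (κ * b) := div_pos hsa hsb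
  refine ⟨neg_of_mul_div_neg (d := 2 * κ) hsa.le (by positivity) (by linarith), ?_⟩
  rcases hband with ⟨-, hGpos⟩ | ⟨hminus, -⟩
  · exact lt_of_sub_mul_div_pos hsa (by positivity) (hG ▸ hGpos)
  · exact absurd hminus (not_le.2 (lt_abs_sub_sqrt_sq_add_one G (by linarith)))
end

section
/- Let a,b>0, let n be a positive integer, set k_n := nπ/a, and assume sin(k_n·b) ≠ 0. Let γ equal either 2k_n·tan(k_n·b/2) or −2k_n·cot(k_n·b/2). Then there exists δ>0 such that every k>0 with |k−k_n|<δ and sin(kb)≠0 satisfies |γ·sin(ka)/(2k) + sin(k(a+b))/sin(kb)| ≤ 1 + |sin(ka)/sin(kb)|; in other words, k_n is an interior point of the set of momenta satisfying the positive band condition for the coupling γ. -/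
/-!
Write `u = sin (k a)`, `q = cos (k a)`, `v = sin (k b)` and `φ k = k tan (k b / 2)` (resp.
`φ k = -k cot (k b / 2)`), so that `v φ k = k (σ - cos (k b))` with `σ = 1` (resp. `-1`) and
`γ = 2 φ kₙ`. Then `v` times the left-hand side is `u (σ + v w) + q v` with
`w = (φ kₙ - φ k) / k`, and the claim becomes `|u (σ + v w) + q v| ≤ |u| + |v|`.
Near `kₙ` the term `u` is small compared to `v` (as `sin (kₙ a) = 0 ≠ sin (kₙ b)`) and `v w`
is small. Both `u q` and `φ` are increasing through `kₙ` (`φ' (kₙ) > 0` reduces to `sin y ± y`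
having the sign of `y`), so `u q w ≤ 0`; this sign is exactly what is needed when `|σ + v w| > 1`.
-/

open Real Filter Topology

theorem eventually_nonneg_mul_sub_of_hasDerivAt {f g : ℝ → ℝ} {f' g' x : ℝ}
    (hf : HasDerivAt f f' x) (hf' : 0 < f') (hg : HasDerivAt g g' x) (hg' : 0 < g') :
    ∀ᶠ y in 𝓝 x, 0 ≤ (f y - f x) * (g y - g x) := by
  have hslope : ∀ᶠ y in 𝓝[≠] x, 0 < slope f x y * slope g x y :=
    ((hasDerivAt_iff_tendsto_slope.mp hf).mul (hasDerivAt_iff_tendsto_slope.mp hg)).eventually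
      (lt_mem_nhds (mul_pos hf' hg'))
  filter_upwards [eventually_nhdsWithin_iff.mp hslope] with y hy
  rcases eq_or_ne y x with rfl | hyx
  · simp
  · have := hy hyx
    rw [slope_def_field, slope_def_field, div_mul_div_comm] at this
    exact ((div_pos_iff_of_pos_right (mul_self_pos.mpr (sub_ne_zero.mpr hyx))).mp this).le

theorem abs_add_le_of_mul_nonpos {A B C : ℝ} (hAB : A * B ≤ 0) (hA : |A| ≤ C)
    (hB : |B| ≤ C) :
    |A + B| ≤ C := by
  rcases mul_nonpos_iff.mp hAB with ⟨h1, h2⟩ | ⟨h1, h2⟩ <;>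
    (rw [abs_le] at hA hB ⊢; constructor <;> linarith [hA.1, hA.2, hB.1, hB.2])

theorem abs_mul_add_mul_le {u q v w σ : ℝ} (hσ : σ = 1 ∨ σ = -1) (hq : |q| ≤ 1)
    (huv : |u| ≤ |v|) (hvw : |v * w| ≤ 1) (hsign : u * q * w ≤ 0) :
    |u * (σ + v * w) + q * v| ≤ |u| + |v| := by
  have hqv : |q * v| ≤ |v| := by rw [abs_mul]; exact mul_le_of_le_one_left (abs_nonneg v) hq
  by_cases hD : |σ + v * w| ≤ 1
  · calc |u * (σ + v * w) + q * v| ≤ |u| * |σ + v * w| + |q * v| := by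
          rw [← abs_mul]; exact abs_add_le _ _
      _ ≤ |u| + |v| := by gcongr; exact mul_le_of_le_one_right (abs_nonneg u) hD
  · have hσvw : 0 < σ * (v * w) := by
      rw [abs_le] at hvw; rw [not_le, lt_abs] at hD
      rcases hσ with rfl | rfl <;> grind
    have hσ2 : σ * σ = 1 := by rcases hσ with rfl | rfl <;> norm_num
    -- `u q v` has the sign opposite to `σ` because `v w` has the sign of `σ` and `u q w ≤ 0`
    have huqv : σ * (u * q * v) ≤ 0 := by
      nlinarith [mul_nonpos_of_nonpos_of_nonneg hsign (mul_self_nonneg v)]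
    refine abs_add_le_of_mul_nonpos ?_ ?_ (hqv.trans (by linarith [abs_nonneg u]))
    · nlinarith
    · calc |u * (σ + v * w)| ≤ |u| * (1 + |v * w|) := by
            rw [abs_mul]; gcongr
            calc |σ + v * w| ≤ |σ| + |v * w| := abs_add_le _ _
              _ = 1 + |v * w| := by rcases hσ with rfl | rfl <;> norm_num
        _ ≤ |u| + |v| := by nlinarith [abs_nonneg u, abs_nonneg (v * w)]

theorem band_condition_eventually_of_phase {a b kn γ σ φ' : ℝ} {φ : ℝ → ℝ} (ha : 0 < a)
    (hsa : sin (kn * a) = 0) (hsb : sin (kn * b) ≠ 0) (hσ : σ = 1 ∨ σ = -1)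
    (hφ : HasDerivAt φ φ' kn) (hφ' : 0 < φ')
    (hphase : ∀ᶠ k in 𝓝 kn, sin (k * b) * φ k = k * (σ - cos (k * b)))
    (hγ : γ = 2 * φ kn) :
    ∀ᶠ k in 𝓝 kn, 0 < k → sin (k * b) ≠ 0 →
      |γ * sin (k * a) / (2 * k) + sin (k * (a + b)) / sin (k * b)| ≤
        1 + |sin (k * a) / sin (k * b)| := by
  have hkn : kn ≠ 0 := by rintro rfl; simp at hsb
  have hca : cos (kn * a) ^ 2 = 1 := by nlinarith [sin_sq_add_cos_sq (kn * a)]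
  have hsincos : HasDerivAt (fun k => sin (k * a) * cos (k * a)) a kn := by
    have hlin := (hasDerivAt_id' kn).mul_const a
    refine (hlin.sin.mul hlin.cos).congr_deriv ?_
    rw [hsa]
    linear_combination a * hca
  have hvw_lim : Tendsto (fun k => sin (k * b) * ((φ kn - φ k) / k)) (𝓝 kn) (𝓝 0) := by
    have : ContinuousAt (fun k => sin (k * b) * ((φ kn - φ k) / k)) kn := by
      have := hφ.continuousAt
      fun_prop (disch := exact hkn)
    simpa using this.tendsto
  have hdom : ∀ᶠ k in 𝓝 kn, |sin (k * a)| < |sin (k * b)| := by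
    refine ContinuousAt.eventually_lt (by fun_prop) (by fun_prop) ?_
    rwa [hsa, abs_zero, abs_pos]
  filter_upwards [eventually_nonneg_mul_sub_of_hasDerivAt hsincos ha hφ hφ', hphase,
    hvw_lim.eventually (Metric.closedBall_mem_nhds 0 one_pos), hdom] with k hsign hk hvw huv hk0 hv
  set w := (φ kn - φ k) / k with hw_def
  rw [dist_zero_right, Real.norm_eq_abs] at hvw
  rw [hsa, zero_mul, sub_zero] at hsign
  have huqw : sin (k * a) * cos (k * a) * w ≤ 0 := by
    rw [show sin (k * a) * cos (k * a) * w =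
      -(sin (k * a) * cos (k * a) * (φ k - φ kn)) / k by ring]
    exact div_nonpos_of_nonpos_of_nonneg (neg_nonpos.mpr hsign) hk0.le
  have hlhs : γ * sin (k * a) / (2 * k) + sin (k * (a + b)) / sin (k * b) =
      (sin (k * a) * (σ + sin (k * b) * w) + cos (k * a) * sin (k * b)) / sin (k * b) := by
    rw [mul_add, sin_add, hγ, hw_def]
    field_simp
    linear_combination sin (k * a) * hk
  have hv' : 0 < |sin (k * b)| := abs_pos.mpr hv
  rw [hlhs, abs_div, abs_div, div_le_iff₀ hv', add_mul, one_mul, div_mul_cancel₀ _ hv'.ne',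
    add_comm |sin (k * b)|]
  exact abs_mul_add_mul_le hσ (abs_cos_le_one _) huv.le hvw huqw

theorem sin_eq_two_mul_sin_half_mul_cos_half (y : ℝ) : sin y = 2 * sin (y / 2) * cos (y / 2) := by
  rw [← sin_two_mul, mul_div_cancel₀ y two_ne_zero]

theorem sin_add_self_pos {y : ℝ} (hy : 0 < y) : 0 < sin y + y := by
  have := abs_sin_lt_abs hy.ne'
  rw [abs_of_pos hy, abs_lt] at this
  linarith

theorem hasDerivAt_mul_tan_half {b x : ℝ} (hc : cos (x * b / 2) ≠ 0) :
    HasDerivAt (fun k => k * tan (k * b / 2))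
      ((sin (x * b) + x * b) / (2 * cos (x * b / 2) ^ 2)) x := by
  have hlin : HasDerivAt (fun k => k * b / 2) (b / 2) x := by
    simpa using ((hasDerivAt_id x).mul_const b).div_const 2
  refine ((hasDerivAt_id' x).mul ((Real.hasDerivAt_tan hc).comp x hlin)).congr_deriv ?_
  rw [Function.comp_apply, sin_eq_two_mul_sin_half_mul_cos_half (x * b), tan_eq_sin_div_cos]
  field_simp

theorem hasDerivAt_neg_mul_cot_half {b x : ℝ} (hs : sin (x * b / 2) ≠ 0) :
    HasDerivAt (fun k => -(k * (cos (k * b / 2) / sin (k * b / 2))))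
      ((x * b - sin (x * b)) / (2 * sin (x * b / 2) ^ 2)) x := by
  have hlin : HasDerivAt (fun k => k * b / 2) (b / 2) x := by
    simpa using ((hasDerivAt_id x).mul_const b).div_const 2
  refine ((hasDerivAt_id' x).mul (hlin.cos.div hlin.sin hs)).neg.congr_deriv ?_
  rw [Pi.div_apply, sin_eq_two_mul_sin_half_mul_cos_half (x * b)]
  field_simp
  linear_combination (x * b) * sin_sq_add_cos_sq (x * b / 2)

theorem sin_mul_tan_half {y : ℝ} (hc : cos (y / 2) ≠ 0) : sin y * tan (y / 2) = 1 - cos y := by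
  rw [tan_eq_sin_div_cos, sin_eq_two_mul_sin_half_mul_cos_half y]
  conv_rhs => rw [show y = 2 * (y / 2) by ring, cos_two_mul]
  field_simp
  linear_combination 2 * sin_sq_add_cos_sq (y / 2)

theorem sin_mul_cot_half {y : ℝ} (hs : sin (y / 2) ≠ 0) :
    sin y * (cos (y / 2) / sin (y / 2)) = 1 + cos y := by
  rw [sin_eq_two_mul_sin_half_mul_cos_half y]
  conv_rhs => rw [show y = 2 * (y / 2) by ring, cos_two_mul]
  field_simp
  ring

theorem stmt_14_general (a b : ℝ) (ha : 0 < a) (hb : 0 < b) (n : ℕ)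
    (kn : ℝ) (hkn : kn = n * π / a) (hsb : Real.sin (kn * b) ≠ 0)
    (γ : ℝ)
    (hγ : γ = 2 * kn * Real.tan (kn * b / 2) ∨
      γ = -(2 * kn * (Real.cos (kn * b / 2) / Real.sin (kn * b / 2)))) :
    ∃ δ > 0, ∀ k : ℝ, 0 < k → |k - kn| < δ → Real.sin (k * b) ≠ 0 →
      |γ * Real.sin (k * a) / (2 * k) + Real.sin (k * (a + b)) / Real.sin (k * b)| ≤
        1 + |Real.sin (k * a) / Real.sin (k * b)| := by
  have hkn0 : 0 < kn := lt_of_le_of_ne (by rw [hkn]; positivity) (by rintro rfl; simp at hsb)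
  have hknb : 0 < kn * b := mul_pos hkn0 hb
  have hsa : sin (kn * a) = 0 := by rw [hkn, div_mul_cancel₀ _ ha.ne', sin_nat_mul_pi]
  obtain ⟨h2s, hc⟩ := mul_ne_zero_iff.mp (sin_eq_two_mul_sin_half_mul_cos_half (kn * b) ▸ hsb)
  have hs := right_ne_zero_of_mul h2s
  have hev : ∀ᶠ k in 𝓝 kn, 0 < k → sin (k * b) ≠ 0 →
      |γ * sin (k * a) / (2 * k) + sin (k * (a + b)) / sin (k * b)| ≤
        1 + |sin (k * a) / sin (k * b)| := by
    rcases hγ with hγ | hγ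
    · refine band_condition_eventually_of_phase ha hsa hsb (Or.inl rfl)
        (hasDerivAt_mul_tan_half hc) (div_pos (sin_add_self_pos hknb) (by positivity)) ?_
        (by rw [hγ]; ring)
      have hcos : ContinuousAt (fun k => cos (k * b / 2)) kn := by fun_prop
      filter_upwards [hcos.eventually_ne hc] with k hck
      rw [mul_left_comm, sin_mul_tan_half hck]
    · refine band_condition_eventually_of_phase ha hsa hsb (Or.inr rfl)
        (hasDerivAt_neg_mul_cot_half hs) (div_pos (sub_pos.mpr (sin_lt hknb)) (by positivity)) ?_
        (by rw [hγ]; ring)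
      have hsin : ContinuousAt (fun k => sin (k * b / 2)) kn := by fun_prop
      filter_upwards [hsin.eventually_ne hs] with k hsk
      rw [mul_neg, mul_left_comm, sin_mul_cot_half hsk]
      ring
  obtain ⟨δ, hδ, h⟩ := Metric.eventually_nhds_iff.mp hev
  exact ⟨δ, hδ, fun k hk hkδ hv => h (by rwa [Real.dist_eq]) hk hv⟩

theorem stmt_14 (a b : ℝ) (ha : 0 < a) (hb : 0 < b) (n : ℕ) (hn : 0 < n)
    (kn : ℝ) (hkn : kn = n * π / a) (hsb : Real.sin (kn * b) ≠ 0)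
    (γ : ℝ)
    (hγ : γ = 2 * kn * Real.tan (kn * b / 2) ∨
      γ = -(2 * kn * (Real.cos (kn * b / 2) / Real.sin (kn * b / 2)))) :
    ∃ δ > 0, ∀ k : ℝ, 0 < k → |k - kn| < δ → Real.sin (k * b) ≠ 0 →
      |γ * Real.sin (k * a) / (2 * k) + Real.sin (k * (a + b)) / Real.sin (k * b)| ≤
        1 + |Real.sin (k * a) / Real.sin (k * b)| :=
  stmt_14_general a b ha hb n kn hkn hsb γ hγ
end

section
/- Let a,b>0, γ∈ℝ, and k>0 with sin(ka)≠0 and sin(kb)≠0. For τ∈[−1,1] set f_γ^τ(k) := γ·sin(ka)/(2k) + sin(k(a+b))/sin(kb) − τ·sin(ka)/sin(kb), and suppose |f_γ^τ(k)| > 1 for every τ∈[−1,1]. Then each of the two functions τ ↦ γ + (2k/sin(ka))·√((f_γ^τ(k))²−1) and τ ↦ γ − (2k/sin(ka))·√((f_γ^τ(k))²−1) is strictly monotone on [−1,1]. -/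
/-! The function `f` is affine in `τ` with slope `-sin(ka)/sin(kb) ≠ 0`, hence strictly monotone.
Being continuous and never in `[-1, 1]` on the connected interval, it stays either above `1` or
below `-1`, and `x ↦ √(x² - 1)` is strictly increasing on `[1, ∞)` and strictly decreasing on
`(-∞, -1]`. So both `g_±` are compositions of strictly monotone or antitone maps. -/

open Real Set

section Composition

variable {α β δ : Type*} [Preorder α] [Preorder β] [Preorder δ]

theorem strictMonoOn_or_strictAntiOn_comp {g : β → δ} {f : α → β} {s : Set α} {t : Set β}
    (hg : StrictMonoOn g t ∨ StrictAntiOn g t) (hf : StrictMonoOn f s ∨ StrictAntiOn f s)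
    (hst : MapsTo f s t) : StrictMonoOn (g ∘ f) s ∨ StrictAntiOn (g ∘ f) s := by
  rcases hg with hg | hg <;> rcases hf with hf | hf
  · exact .inl (hg.comp hf hst)
  · exact .inr (hg.comp_strictAntiOn hf hst)
  · exact .inr (hg.comp_strictMonoOn hf hst)
  · exact .inl (hg.comp hf hst)

end Composition

section Affine

variable {K : Type*} [Field K] [LinearOrder K] [IsStrictOrderedRing K] {c : K}

theorem strictMono_or_strictAnti_const_add_mul (hc : c ≠ 0) (d : K) :
    StrictMono (fun x => d + c * x) ∨ StrictAnti (fun x => d + c * x) := by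
  rcases hc.lt_or_gt with hc | hc
  · exact .inr fun x y hxy => add_lt_add_right (mul_lt_mul_of_neg_left hxy hc) d
  · exact .inl fun x y hxy => add_lt_add_right (mul_lt_mul_of_pos_left hxy hc) d

theorem strictMono_or_strictAnti_const_sub_mul (hc : c ≠ 0) (d : K) :
    StrictMono (fun x => d - c * x) ∨ StrictAnti (fun x => d - c * x) := by
  simpa only [sub_eq_add_neg, neg_mul] using
    strictMono_or_strictAnti_const_add_mul (neg_ne_zero.mpr hc) d

end Affine

theorem IsPreconnected.forall_lt_or_forall_lt_neg {X : Type*} [TopologicalSpace X] {s : Set X}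
    {f : X → ℝ} {r : ℝ} (hs : IsPreconnected s) (hf : ContinuousOn f s) (hr : 0 ≤ r)
    (hgap : ∀ x ∈ s, r < |f x|) : (∀ x ∈ s, r < f x) ∨ (∀ x ∈ s, f x < -r) := by
  by_contra! hcon
  obtain ⟨⟨x, hx, hfx⟩, ⟨y, hy, hfy⟩⟩ := hcon
  have hx_neg : f x < -r := by cases lt_abs.mp (hgap x hx) <;> linarith
  have hy_pos : r < f y := by cases lt_abs.mp (hgap y hy) <;> linarith
  obtain ⟨z, hz, hfz⟩ := hs.intermediate_value hx hy hf
    (show (0 : ℝ) ∈ Icc (f x) (f y) from ⟨by linarith, by linarith⟩)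
  have := hgap z hz
  rw [hfz, abs_zero] at this
  linarith

theorem strictMonoOn_sqrt_sq_sub_one : StrictMonoOn (fun x : ℝ => √(x ^ 2 - 1)) (Ici 1) :=
  fun x hx _ _ hxy =>
    Real.sqrt_lt_sqrt (by nlinarith [mem_Ici.mp hx]) (by nlinarith [mem_Ici.mp hx])

theorem strictAntiOn_sqrt_sq_sub_one : StrictAntiOn (fun x : ℝ => √(x ^ 2 - 1)) (Iic (-1)) :=
  fun _ _ y hy hxy =>
    Real.sqrt_lt_sqrt (by nlinarith [mem_Iic.mp hy]) (by nlinarith [mem_Iic.mp hy])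

theorem strictMonoOn_or_strictAntiOn_sqrt_sq_sub_one_comp {X : Type*} [TopologicalSpace X]
    [Preorder X] {s : Set X} {f : X → ℝ} (hs : IsPreconnected s) (hfc : ContinuousOn f s)
    (hgap : ∀ x ∈ s, 1 < |f x|) (hf : StrictMonoOn f s ∨ StrictAntiOn f s) :
    StrictMonoOn (fun x => √(f x ^ 2 - 1)) s ∨ StrictAntiOn (fun x => √(f x ^ 2 - 1)) s := by
  rcases hs.forall_lt_or_forall_lt_neg hfc zero_le_one hgap with hpos | hneg
  · exact strictMonoOn_or_strictAntiOn_comp (g := fun y => √(y ^ 2 - 1))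
      (.inl strictMonoOn_sqrt_sq_sub_one) hf fun x hx => (hpos x hx).le
  · exact strictMonoOn_or_strictAntiOn_comp (g := fun y => √(y ^ 2 - 1))
      (.inr strictAntiOn_sqrt_sq_sub_one) hf fun x hx => (hneg x hx).le

theorem stmt_15_general (a b γ k : ℝ)
    (hsa : Real.sin (k * a) ≠ 0) (hsb : Real.sin (k * b) ≠ 0)
    (f : ℝ → ℝ)
    (hf : f = fun τ => γ * Real.sin (k * a) / (2 * k) +
        Real.sin (k * (a + b)) / Real.sin (k * b) - τ * Real.sin (k * a) / Real.sin (k * b))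
    (hgap : ∀ τ ∈ Set.Icc (-1 : ℝ) 1, 1 < |f τ|) :
    ((StrictMonoOn (fun τ => γ + (2 * k / Real.sin (k * a)) * Real.sqrt ((f τ) ^ 2 - 1))
        (Set.Icc (-1 : ℝ) 1) ∨
      StrictAntiOn (fun τ => γ + (2 * k / Real.sin (k * a)) * Real.sqrt ((f τ) ^ 2 - 1))
        (Set.Icc (-1 : ℝ) 1)) ∧
    (StrictMonoOn (fun τ => γ - (2 * k / Real.sin (k * a)) * Real.sqrt ((f τ) ^ 2 - 1))
        (Set.Icc (-1 : ℝ) 1) ∨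
      StrictAntiOn (fun τ => γ - (2 * k / Real.sin (k * a)) * Real.sqrt ((f τ) ^ 2 - 1))
        (Set.Icc (-1 : ℝ) 1))) := by
  have hf_affine : f = fun τ => (γ * sin (k * a) / (2 * k) + sin (k * (a + b)) / sin (k * b)) -
      sin (k * a) / sin (k * b) * τ := by
    rw [hf]; funext τ; ring
  have hf_mono : StrictMonoOn f (Icc (-1) 1) ∨ StrictAntiOn f (Icc (-1) 1) := by
    rw [hf_affine]
    exact (strictMono_or_strictAnti_const_sub_mul (div_ne_zero hsa hsb) _).imp
      (·.strictMonoOn _) (·.strictAntiOn _)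
  have hroot := strictMonoOn_or_strictAntiOn_sqrt_sq_sub_one_comp isPreconnected_Icc
    (by rw [hf]; fun_prop) hgap hf_mono
  have hk : k ≠ 0 := by rintro rfl; simp at hsa
  have hc : 2 * k / sin (k * a) ≠ 0 := div_ne_zero (mul_ne_zero two_ne_zero hk) hsa
  have hplus := strictMonoOn_or_strictAntiOn_comp
    ((strictMono_or_strictAnti_const_add_mul hc γ).imp (·.strictMonoOn univ) (·.strictAntiOn univ))
    hroot (mapsTo_univ _ _)
  have hminus := strictMonoOn_or_strictAntiOn_comp
    ((strictMono_or_strictAnti_const_sub_mul hc γ).imp (·.strictMonoOn univ) (·.strictAntiOn univ))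
    hroot (mapsTo_univ _ _)
  exact ⟨hplus, hminus⟩

theorem stmt_15 (a b γ k : ℝ) (ha : 0 < a) (hb : 0 < b) (hk : 0 < k)
    (hsa : Real.sin (k * a) ≠ 0) (hsb : Real.sin (k * b) ≠ 0)
    (f : ℝ → ℝ)
    (hf : f = fun τ => γ * Real.sin (k * a) / (2 * k) +
        Real.sin (k * (a + b)) / Real.sin (k * b) - τ * Real.sin (k * a) / Real.sin (k * b))
    (hgap : ∀ τ ∈ Set.Icc (-1 : ℝ) 1, 1 < |f τ|) :
    ((StrictMonoOn (fun τ => γ + (2 * k / Real.sin (k * a)) * Real.sqrt ((f τ) ^ 2 - 1))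
        (Set.Icc (-1 : ℝ) 1) ∨
      StrictAntiOn (fun τ => γ + (2 * k / Real.sin (k * a)) * Real.sqrt ((f τ) ^ 2 - 1))
        (Set.Icc (-1 : ℝ) 1)) ∧
    (StrictMonoOn (fun τ => γ - (2 * k / Real.sin (k * a)) * Real.sqrt ((f τ) ^ 2 - 1))
        (Set.Icc (-1 : ℝ) 1) ∨
      StrictAntiOn (fun τ => γ - (2 * k / Real.sin (k * a)) * Real.sqrt ((f τ) ^ 2 - 1))
        (Set.Icc (-1 : ℝ) 1))) :=
  stmt_15_general a b γ k hsa hsb f hf hgap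
end

section
/- Let a,b>0 and γ∈ℝ. Define B := {E>0 : with k:=√E one has sin(kb)≠0 and |γ·sin(ka)/(2k) + sin(k(a+b))/sin(kb)| ≤ 1 + |sin(ka)/sin(kb)|}. Then (1/K)·λ(B∩[0,K]) tends to 1 as K→∞, where λ denotes Lebesgue measure. -/
/-!
For large energies the coupling term `γ sin(ka)/(2k)` is negligible against `sin²(ka)/2`,
and then the band condition holds automatically by the triangle inequality, since
`sin(k(a+b))/sin(kb) = sin(ka) cot(kb) + cos(ka)` and `sin²(ka)/2 ≤ 1 - |cos(ka)|`.
So `[0, K] \ B` is covered by a bounded interval, the countable set where `sin(kb) = 0`, and the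
energies with `|sin(ka)| ≤ t`. The latter lie within `O(t √K)` of one of the `O(√K)` points
`(nπ/a)²`, so their measure is `O(t K)` and the density of the complement tends to zero.
-/

open Real Set Filter MeasureTheory Topology

lemma band_condition_of_abs_le {a b γ k : ℝ} (hk : 0 < k) (hsb : sin (k * b) ≠ 0)
    (hγ : |γ| ≤ k * |sin (k * a)|) :
    |γ * sin (k * a) / (2 * k) + sin (k * (a + b)) / sin (k * b)| ≤
      1 + |sin (k * a) / sin (k * b)| := by
  have hsplit : sin (k * (a + b)) / sin (k * b) =
      sin (k * a) * cos (k * b) / sin (k * b) + cos (k * a) := by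
    rw [mul_add, sin_add]
    field_simp
  have hcot : |sin (k * a) * cos (k * b) / sin (k * b)| ≤ |sin (k * a) / sin (k * b)| := by
    rw [mul_div_right_comm, abs_mul]
    exact mul_le_of_le_one_right (abs_nonneg _) (abs_cos_le_one _)
  have hcoupling : |γ * sin (k * a) / (2 * k)| ≤ 1 - |cos (k * a)| := by
    have hpyth : |sin (k * a)| ^ 2 = (1 - |cos (k * a)|) * (1 + |cos (k * a)|) := by
      nlinarith [sin_sq_add_cos_sq (k * a), sq_abs (sin (k * a)), sq_abs (cos (k * a))]
    rw [abs_div, abs_mul, abs_of_pos (by positivity : 0 < 2 * k), div_le_iff₀ (by positivity)]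
    have hc : 0 ≤ 1 - |cos (k * a)| := sub_nonneg.2 (abs_cos_le_one _)
    calc |γ| * |sin (k * a)| ≤ k * |sin (k * a)| ^ 2 := by
          nlinarith [mul_le_mul_of_nonneg_right hγ (abs_nonneg (sin (k * a)))]
      _ ≤ (1 - |cos (k * a)|) * (2 * k) := by
          rw [hpyth]; nlinarith [mul_nonneg (mul_nonneg hk.le hc) hc]
  rw [hsplit, ← add_assoc]
  calc _ ≤ |γ * sin (k * a) / (2 * k)| + |sin (k * a) * cos (k * b) / sin (k * b)| +
        |cos (k * a)| := abs_add_three _ _ _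
    _ ≤ _ := by linarith

def positiveBandSet (a b γ : ℝ) : Set ℝ :=
  {E : ℝ | 0 < E ∧ sin (√E * b) ≠ 0 ∧
    |γ * sin (√E * a) / (2 * √E) + sin (√E * (a + b)) / sin (√E * b)| ≤
      1 + |sin (√E * a) / sin (√E * b)|}

lemma Icc_sdiff_positiveBandSet_subset (a b γ : ℝ) {t : ℝ} (ht : 0 < t) (K : ℝ) :
    Icc 0 K \ positiveBandSet a b γ ⊆
      Icc 0 (γ ^ 2 / t ^ 2) ∪ {E : ℝ | 0 ≤ E ∧ sin (√E * b) = 0} ∪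
        {E : ℝ | E ∈ Icc 0 K ∧ |sin (√E * a)| ≤ t} := by
  rintro E ⟨hEK, hEB⟩
  by_contra hout
  simp only [mem_union, mem_Icc, mem_ofPred_eq, not_or, not_and, not_le] at hout
  obtain ⟨⟨hlarge, hsb⟩, hsa⟩ := hout
  have hE : γ ^ 2 / t ^ 2 < E := hlarge hEK.1
  have hE0 : 0 < E := lt_of_le_of_lt (by positivity) hE
  have hγ : |γ| ≤ √E * t := by
    rw [← sqrt_sq ht.le, ← sqrt_mul hE0.le]
    exact abs_le_sqrt ((div_le_iff₀ (by positivity)).1 hE.le)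
  exact hEB ⟨hE0, hsb hEK.1, band_condition_of_abs_le (sqrt_pos.2 hE0) (hsb hEK.1)
    (hγ.trans (by gcongr; exact (hsa hEK).le))⟩

lemma countable_setOf_sin_sqrt_mul_eq_zero {b : ℝ} (hb : b ≠ 0) :
    {E : ℝ | 0 ≤ E ∧ sin (√E * b) = 0}.Countable := by
  refine (countable_range fun m : ℤ => (m * π / b) ^ 2).mono ?_
  rintro E ⟨hE, hsin⟩
  obtain ⟨m, hm⟩ := sin_eq_zero_iff.mp hsin
  exact ⟨m, by simp only [hm, mul_div_cancel_right₀ _ hb, sq_sqrt hE]⟩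

lemma volume_Icc_sdiff_positiveBandSet_le {a b γ t : ℝ} (hb : b ≠ 0) (ht : 0 < t) (K : ℝ) :
    volume (Icc 0 K \ positiveBandSet a b γ) ≤
      ENNReal.ofReal (γ ^ 2 / t ^ 2) + volume {E : ℝ | E ∈ Icc 0 K ∧ |sin (√E * a)| ≤ t} := by
  have hnull : volume {E : ℝ | 0 ≤ E ∧ sin (√E * b) = 0} = 0 :=
    (countable_setOf_sin_sqrt_mul_eq_zero hb).measure_zero _
  calc volume (Icc 0 K \ positiveBandSet a b γ)
      ≤ volume (Icc 0 (γ ^ 2 / t ^ 2) ∪ {E : ℝ | 0 ≤ E ∧ sin (√E * b) = 0} ∪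
          {E : ℝ | E ∈ Icc 0 K ∧ |sin (√E * a)| ≤ t}) :=
        measure_mono (Icc_sdiff_positiveBandSet_subset a b γ ht K)
    _ ≤ volume (Icc 0 (γ ^ 2 / t ^ 2)) + volume {E : ℝ | 0 ≤ E ∧ sin (√E * b) = 0} +
          volume {E : ℝ | E ∈ Icc 0 K ∧ |sin (√E * a)| ≤ t} :=
        (measure_union_le _ _).trans (by gcongr; exact measure_union_le _ _)
    _ = _ := by rw [Real.volume_Icc, sub_zero, hnull, add_zero]

lemma abs_sub_floor_mul_pi_le {x : ℝ} (hx : 0 ≤ x) :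
    |x - ⌊x / π + 1 / 2⌋₊ * π| ≤ π / 2 * |sin x| := by
  set n := ⌊x / π + 1 / 2⌋₊
  have hround : |x / π - n| ≤ 1 / 2 := by
    have hle := Nat.floor_le (by positivity : 0 ≤ x / π + 1 / 2)
    have hlt := Nat.lt_floor_add_one (x / π + 1 / 2)
    rw [abs_le]
    constructor <;> linarith
  have hy : |x - n * π| ≤ π / 2 := by
    rw [show x - n * π = π * (x / π - n) by field_simp, abs_mul, abs_of_pos pi_pos]
    nlinarith [pi_pos]
  have hjordan := mul_abs_le_abs_sin hy
  rw [sin_sub_nat_mul_pi, abs_mul, abs_pow, abs_neg, abs_one, one_pow, one_mul] at hjordan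
  calc |x - n * π| = π / 2 * (2 / π * |x - n * π|) := by field_simp
    _ ≤ π / 2 * |sin x| := by gcongr

lemma abs_sub_sq_le_of_abs_sin_sqrt_mul_le {a t K E : ℝ} (ha : 0 < a) (hE : E ∈ Icc 0 K)
    (hsin : |sin (√E * a)| ≤ t) :
    |E - (⌊√E * a / π + 1 / 2⌋₊ * π / a) ^ 2| ≤
      π * t / (2 * a) * (2 * √K + π * t / (2 * a)) := by
  set k := √E
  set c := ⌊k * a / π + 1 / 2⌋₊ * π / a with hc_def
  set δ := π * t / (2 * a) with hδ_def
  have hδ : 0 ≤ δ := by have := (abs_nonneg _).trans hsin; positivity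
  have hkc : |k - c| ≤ δ := by
    have hnear := abs_sub_floor_mul_pi_le (by positivity : 0 ≤ k * a)
    have hkc_eq : k - c = (k * a - ⌊k * a / π + 1 / 2⌋₊ * π) / a := by
      rw [hc_def]
      field_simp
    rw [hkc_eq, abs_div, abs_of_pos ha, div_le_iff₀ ha]
    calc _ ≤ π / 2 * |sin (k * a)| := hnear
      _ ≤ π / 2 * t := by gcongr
      _ = δ * a := by rw [hδ_def]; field_simp
  have hkK : k ≤ √K := sqrt_le_sqrt hE.2
  have hc : 0 ≤ c := by positivity
  calc |E - c ^ 2| = |k - c| * (k + c) := by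
        rw [← sq_sqrt hE.1, show k ^ 2 - c ^ 2 = (k - c) * (k + c) by ring, abs_mul,
          abs_of_nonneg (by positivity : 0 ≤ k + c)]
    _ ≤ δ * (2 * √K + δ) :=
        mul_le_mul hkc (by linarith [(abs_le.1 hkc).1]) (by positivity) hδ

lemma volume_abs_sin_sqrt_mul_le_le {a t : ℝ} (ha : 0 < a) (ht : 0 ≤ t) (K : ℝ) :
    volume {E : ℝ | E ∈ Icc 0 K ∧ |sin (√E * a)| ≤ t} ≤
      ENNReal.ofReal ((√K * a / π + 3 / 2) *
        (2 * (π * t / (2 * a) * (2 * √K + π * t / (2 * a))))) := by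
  set r := π * t / (2 * a) * (2 * √K + π * t / (2 * a))
  set N := ⌊√K * a / π + 1 / 2⌋₊ + 1
  have hcover : {E : ℝ | E ∈ Icc 0 K ∧ |sin (√E * a)| ≤ t} ⊆
      ⋃ n ∈ Finset.range N, Icc ((n * π / a) ^ 2 - r) ((n * π / a) ^ 2 + r) := by
    rintro E ⟨hE, hsin⟩
    refine mem_iUnion₂.2 ⟨_, Finset.mem_range.2 (Nat.lt_succ_of_le (Nat.floor_mono ?_)),
      mem_Icc_iff_abs_le.1 ((abs_sub_comm _ _).trans_le
        (abs_sub_sq_le_of_abs_sin_sqrt_mul_le ha hE hsin))⟩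
    gcongr
    exact hE.2
  have hN : (N : ℝ) ≤ √K * a / π + 3 / 2 := by
    have := Nat.floor_le (by positivity : 0 ≤ √K * a / π + 1 / 2)
    push_cast [N]
    linarith
  calc volume {E : ℝ | E ∈ Icc 0 K ∧ |sin (√E * a)| ≤ t}
      ≤ volume (⋃ n ∈ Finset.range N, Icc ((n * π / a) ^ 2 - r) ((n * π / a) ^ 2 + r)) :=
        measure_mono hcover
    _ ≤ ∑ n ∈ Finset.range N, volume (Icc ((n * π / a) ^ 2 - r) ((n * π / a) ^ 2 + r)) :=
        measure_biUnion_finset_le _ _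
    _ = ENNReal.ofReal (N * (2 * r)) := by
        simp only [Real.volume_Icc, add_sub_sub_cancel, ← two_mul, Finset.sum_const,
          Finset.card_range, nsmul_eq_mul, ENNReal.ofReal_mul (Nat.cast_nonneg N),
          ENNReal.ofReal_natCast]
    _ ≤ _ := ENNReal.ofReal_le_ofReal (by gcongr)

lemma exists_pos_forall_volume_abs_sin_sqrt_mul_le_le {a ε : ℝ} (ha : 0 < a) (hε : 0 < ε) :
    ∃ t > 0, ∀ K ≥ 1,
      volume {E : ℝ | E ∈ Icc 0 K ∧ |sin (√E * a)| ≤ t} ≤ ENNReal.ofReal (ε * K) := by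
  set A := a / π + 3 / 2 with hA_def
  set δ := min 1 (ε / (6 * A))
  have hδ : 0 < δ := lt_min one_pos (by positivity)
  refine ⟨2 * a * δ / π, by positivity, fun K hK =>
    (volume_abs_sin_sqrt_mul_le_le ha (by positivity) K).trans (ENNReal.ofReal_le_ofReal ?_)⟩
  rw [show π * (2 * a * δ / π) / (2 * a) = δ by field_simp]
  have hsK : 1 ≤ √K := one_le_sqrt.2 hK
  have hδA : 6 * A * δ ≤ ε := by
    have := min_le_right 1 (ε / (6 * A))
    rwa [le_div_iff₀ (by positivity), mul_comm] at this
  calc (√K * a / π + 3 / 2) * (2 * (δ * (2 * √K + δ)))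
      ≤ (A * √K) * (2 * (δ * (3 * √K))) := by
        gcongr
        · rw [hA_def, add_mul, show √K * a / π = a / π * √K by ring]
          linarith
        · linarith [min_le_left 1 (ε / (6 * A))]
    _ = 6 * A * δ * (√K * √K) := by ring
    _ ≤ ε * K := by rw [mul_self_sqrt (by linarith)]; gcongr

lemma tendsto_div_atTop_zero_of_le_add_mul {f : ℝ → ℝ} (hf : ∀ K, 0 ≤ f K)
    (h : ∀ ε > 0, ∃ M, ∀ᶠ K in atTop, f K ≤ M + ε * K) :
    Tendsto (fun K => f K / K) atTop (𝓝 0) := by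
  refine tendsto_order.2 ⟨fun η hη => ?_, fun η hη => ?_⟩
  · filter_upwards [eventually_ge_atTop 0] with K hK
    exact hη.trans_le (div_nonneg (hf K) hK)
  · obtain ⟨M, hM⟩ := h (η / 2) (by positivity)
    filter_upwards [hM, eventually_gt_atTop (max 0 (2 * M / η))] with K hfK hK
    have hK0 : 0 < K := (le_max_left _ _).trans_lt hK
    have hMK : 2 * M < η * K := (div_lt_iff₀' hη).1 ((le_max_right _ _).trans_lt hK)
    rw [div_lt_iff₀ hK0]
    linarith

lemma tendsto_measureReal_inter_Icc_div_of_sdiff {B : Set ℝ}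
    (h : Tendsto (fun K => volume.real (Icc 0 K \ B) / K) atTop (𝓝 0)) :
    Tendsto (fun K => volume.real (B ∩ Icc 0 K) / K) atTop (𝓝 1) := by
  have hlower : Tendsto (fun K => 1 - volume.real (Icc 0 K \ B) / K) atTop (𝓝 1) := by
    simpa using (tendsto_const_nhds (x := (1 : ℝ))).sub h
  refine tendsto_of_tendsto_of_tendsto_of_le_of_le' hlower tendsto_const_nhds ?_ ?_
  · filter_upwards [eventually_gt_atTop 0] with K hK
    have hcompl := le_measureReal_sdiff (μ := volume) (s₁ := Icc 0 K) (s₂ := Icc 0 K \ B)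
      (measure_ne_top_of_subset sdiff_subset measure_Icc_lt_top.ne)
    rw [sdiff_sdiff_right_self, inter_comm, volume_real_Icc_of_le hK.le, sub_zero] at hcompl
    rwa [one_sub_div hK.ne', div_le_div_iff_of_pos_right hK]
  · filter_upwards [eventually_gt_atTop 0] with K hK
    rw [div_le_one hK]
    calc volume.real (B ∩ Icc 0 K) ≤ volume.real (Icc 0 K) :=
          measureReal_mono inter_subset_right measure_Icc_lt_top.ne
      _ = K := by rw [volume_real_Icc_of_le hK.le, sub_zero]

theorem stmt_19 (a b γ : ℝ) (ha : 0 < a) (hb : 0 < b)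
    (B : Set ℝ)
    (hB : B = {E : ℝ | 0 < E ∧ Real.sin (Real.sqrt E * b) ≠ 0 ∧
      |γ * Real.sin (Real.sqrt E * a) / (2 * Real.sqrt E) +
          Real.sin (Real.sqrt E * (a + b)) / Real.sin (Real.sqrt E * b)| ≤
        1 + |Real.sin (Real.sqrt E * a) / Real.sin (Real.sqrt E * b)|}) :
    Tendsto (fun K : ℝ => (volume (B ∩ Set.Icc 0 K)).toReal / K) atTop (nhds 1) := by
  change B = positiveBandSet a b γ at hB
  subst hB
  refine tendsto_measureReal_inter_Icc_div_of_sdiff <| tendsto_div_atTop_zero_of_le_add_mul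
    (fun _ => measureReal_nonneg) fun ε hε => ?_
  obtain ⟨t, ht, hsmall⟩ := exists_pos_forall_volume_abs_sin_sqrt_mul_le_le ha hε
  refine ⟨γ ^ 2 / t ^ 2, ?_⟩
  filter_upwards [eventually_ge_atTop 1] with K hK
  have hεK : 0 ≤ ε * K := by positivity
  refine ENNReal.toReal_le_of_le_ofReal (by positivity) ?_
  calc volume (Icc 0 K \ positiveBandSet a b γ)
      ≤ ENNReal.ofReal (γ ^ 2 / t ^ 2) + volume {E : ℝ | E ∈ Icc 0 K ∧ |sin (√E * a)| ≤ t} :=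
        volume_Icc_sdiff_positiveBandSet_le hb.ne' ht K
    _ ≤ ENNReal.ofReal (γ ^ 2 / t ^ 2 + ε * K) := by
        rw [ENNReal.ofReal_add (by positivity) hεK]
        gcongr
        exact hsmall K hK
end
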